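/- arXiv:1208.4790 — 8 statements merged into one kernel-verified Lean document; each statement's English description precedes it below -/
import Mathlib

section
/- Let 0 < n_1 < ... < n_K and 0 < F_1 < ... < F_K, with z_{k,l} = (F_k n_l - F_l n_k)/(F_l - F_k) for k < l. Define π_1 = 1 and recursively π_{i+1} as the largest index l in {π_i+1,...,K} minimizing z_{π_i, l}, until π_I = K. Then for every i = 1,...,I-2, z_{π_i, π_{i+1}} ≤ z_{π_{i+1}, π_{i+2}}. -/
open Real

/-- Crossing point of the marginal utility functions `u_k` and `u_l`. -/
noncomputable def zc (n F : ℕ → ℝ) (k l : ℕ) : ℝ :=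
  (F k * n l - F l * n k) / (F l - F k)

/-- Monotonicity of the crossing points along the recursively defined
index sequence `σ_1 = 1`, `σ_{i+1} = max(argmin_{σ_i < l ≤ K} z_{σ_i,l})`,
`σ_I = K`: for every `i = 1, …, I-2`, `z_{σ_i,σ_{i+1}} ≤ z_{σ_{i+1},σ_{i+2}}`. -/
theorem crossing_points_monotone
    (K I : ℕ) (n F : ℕ → ℝ)
    (hn1 : 0 < n 1)
    (hnmono : ∀ k l, 1 ≤ k → k < l → l ≤ K → n k < n l)
    (hF1 : 0 < F 1)
    (hFmono : ∀ k l, 1 ≤ k → k < l → l ≤ K → F k < F l)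
    (σ : ℕ → ℕ)
    (hI : 1 ≤ I) (hσ1 : σ 1 = 1) (hσI : σ I = K)
    (hσmono : ∀ i j, 1 ≤ i → i < j → j ≤ I → σ i < σ j)
    (hmin : ∀ i, 1 ≤ i → i < I → ∀ l, σ i < l → l ≤ K →
      zc n F (σ i) (σ (i + 1)) ≤ zc n F (σ i) l)
    (hmax : ∀ i, 1 ≤ i → i < I → ∀ l, σ (i + 1) < l → l ≤ K →
      zc n F (σ i) (σ (i + 1)) < zc n F (σ i) l) :
    ∀ i, 1 ≤ i → i + 2 ≤ I →
      zc n F (σ i) (σ (i + 1)) ≤ zc n F (σ (i + 1)) (σ (i + 2)) := by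
  intro i hi hi2
  set a := σ i with ha
  set b := σ (i + 1) with hb
  set c := σ (i + 2) with hc
  have ha1 : 1 ≤ a := by
    rcases eq_or_lt_of_le hi with h | h
    · rw [ha, ← h, hσ1]
    · have := hσmono 1 i (le_refl 1) h (by omega)
      rw [hσ1] at this; omega
  have hab : a < b := hσmono i (i + 1) hi (by omega) (by omega)
  have hbc : b < c := hσmono (i + 1) (i + 2) (by omega) (by omega) (by omega)
  have hcK : c ≤ K := by
    rcases eq_or_lt_of_le hi2 with h | h
    · rw [hc, h, hσI]
    · have := hσmono (i + 2) I (by omega) h (le_refl I)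
      rw [hσI] at this; omega
  have hFab : F a < F b := hFmono a b ha1 hab (by omega)
  have hFbc : F b < F c := hFmono b c (by omega) hbc hcK
  have hFac : F a < F c := lt_trans hFab hFbc
  have hFa : 0 < F a := by
    rcases eq_or_lt_of_le ha1 with h | h
    · rw [← h]; exact hF1
    · exact lt_trans hF1 (hFmono 1 a (le_refl 1) h (by omega))
  -- from hmin with l = c
  have h1 : zc n F a b ≤ zc n F a c :=
    hmin i hi (by omega) c (lt_trans hab hbc) hcK
  have hba : 0 < F b - F a := by linarith
  have hca : 0 < F c - F a := by linarith
  have hcb : 0 < F c - F b := by linarith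
  set z1 := zc n F a b with hz1
  have heq : z1 * (F b - F a) = F a * n b - F b * n a := by
    rw [hz1]; unfold zc; field_simp
  have h1' : z1 * (F c - F a) ≤ F a * n c - F c * n a := by
    have := h1
    unfold zc at this
    exact (le_div_iff₀ hca).mp this
  unfold zc
  rw [le_div_iff₀ hcb]
  nlinarith [mul_le_mul_of_nonneg_left h1' (le_of_lt (lt_trans hFa hFab)),
    mul_pos hFa hcb, heq]
end

section
/- Let 0 < n_1 < ... < n_K and 0 < F_1 < ... < F_K, with z_{k,l} = (F_k n_l - F_l n_k)/(F_l - F_k) for k < l, and define the sequence π_1 = 1, π_{i+1} = max(argmin_{l > π_i} z_{π_i,l}), ending at π_I = K. Then for every i = 1,...,I-1 and every l = 1,...,π_{i+1}-1, z_{π_i, π_{i+1}} ≥ z_{l, π_{i+1}}. -/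
open Real

private lemma key1 (na nb nc fa fb fc : ℝ) (ha : 0 < fa) (hab : fa < fb) (hbc : fb < fc)
    (h : (fa*nb - fb*na)/(fb-fa) ≤ (fb*nc - fc*nb)/(fc-fb)) :
    (fa*nc - fc*na)/(fc-fa) ≤ (fb*nc - fc*nb)/(fc-fb) := by
  rw [div_le_div_iff₀ (by linarith) (by linarith)] at h ⊢
  nlinarith [h, ha, hab, hbc, mul_pos ha (sub_pos.2 hab)]

private lemma key2 (na nb nc fa fb fc : ℝ) (ha : 0 < fa) (hab : fa < fb) (hbc : fb < fc)
    (h : (fa*nc - fc*na)/(fc-fa) ≤ (fa*nb - fb*na)/(fb-fa)) :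
    (fb*nc - fc*nb)/(fc-fb) ≤ (fa*nc - fc*na)/(fc-fa) := by
  rw [div_le_div_iff₀ (by linarith) (by linarith)] at h ⊢
  nlinarith [h, ha, hab, hbc]

private lemma key3 (na nb nc fa fb fc : ℝ) (ha : 0 < fa) (hab : fa < fb) (hbc : fb < fc)
    (h : (fa*nb - fb*na)/(fb-fa) < (fa*nc - fc*na)/(fc-fa)) :
    (fa*nb - fb*na)/(fb-fa) < (fb*nc - fc*nb)/(fc-fb) := by
  rw [div_lt_div_iff₀ (by linarith) (by linarith)] at h ⊢
  nlinarith [h, ha, hab, hbc]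

/-- For the recursively defined index sequence `σ_1 = 1`,
`σ_{i+1} = max(argmin_{σ_i < l ≤ K} z_{σ_i,l})`, `σ_I = K`: for every
`i = 1, …, I-1` and every `l = 1, …, σ_{i+1}-1`,
`z_{σ_i,σ_{i+1}} ≥ z_{l,σ_{i+1}}`. -/
theorem crossing_points_dominate_left
    (K I : ℕ) (n F : ℕ → ℝ)
    (hn1 : 0 < n 1)
    (hnmono : ∀ k l, 1 ≤ k → k < l → l ≤ K → n k < n l)
    (hF1 : 0 < F 1)
    (hFmono : ∀ k l, 1 ≤ k → k < l → l ≤ K → F k < F l)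
    (σ : ℕ → ℕ)
    (hI : 1 ≤ I) (hσ1 : σ 1 = 1) (hσI : σ I = K)
    (hσmono : ∀ i j, 1 ≤ i → i < j → j ≤ I → σ i < σ j)
    (hmin : ∀ i, 1 ≤ i → i < I → ∀ l, σ i < l → l ≤ K →
      zc n F (σ i) (σ (i + 1)) ≤ zc n F (σ i) l)
    (hmax : ∀ i, 1 ≤ i → i < I → ∀ l, σ (i + 1) < l → l ≤ K →
      zc n F (σ i) (σ (i + 1)) < zc n F (σ i) l) :
    ∀ i, 1 ≤ i → i < I → ∀ l, 1 ≤ l → l < σ (i + 1) →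
      zc n F l (σ (i + 1)) ≤ zc n F (σ i) (σ (i + 1)) := by
  -- basic index bookkeeping
  have hσ1le : ∀ j, 1 ≤ j → j ≤ I → 1 ≤ σ j := by
    intro j hj hjI
    rcases eq_or_lt_of_le hj with h | h
    · rw [← h, hσ1]
    · have := hσmono 1 j le_rfl h hjI; omega
  have hσK : ∀ j, 1 ≤ j → j ≤ I → σ j ≤ K := by
    intro j hj hjI
    rcases eq_or_lt_of_le hjI with h | h
    · rw [h, hσI]
    · have := hσmono j I hj h le_rfl; omega
  have hFpos : ∀ k, 1 ≤ k → k ≤ K → 0 < F k := by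
    intro k hk hkK
    rcases eq_or_lt_of_le hk with h | h
    · rw [← h]; exact hF1
    · exact lt_trans hF1 (hFmono 1 k le_rfl h hkK)
  intro i hi
  induction i, hi using Nat.le_induction with
  | base =>
    intro h1I l hl1 hl2
    rcases eq_or_lt_of_le hl1 with h | h
    · rw [hσ1, ← h]
    · -- 1 < l < σ 2
      have h2I : 2 ≤ I := h1I
      have hσ2K : σ 2 ≤ K := hσK 2 (by norm_num) h2I
      have hlK : l ≤ K := le_trans (le_of_lt hl2) hσ2K
      have hmin' := hmin 1 le_rfl h1I l (by rw [hσ1]; exact h) hlK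
      rw [hσ1] at hmin' ⊢
      exact key2 (n 1) (n l) (n (σ 2)) (F 1) (F l) (F (σ 2)) hF1
        (hFmono 1 l le_rfl h hlK) (hFmono l (σ 2) hl1 hl2 hσ2K) hmin'
  | succ i hi ih =>
    intro hI2 l hl1 hl2
    have hiI : i < I := by omega
    have hi1I : i + 1 < I := hI2
    have hσs : 1 ≤ σ (i + 1) := hσ1le (i + 1) (by omega) (by omega)
    have hσmK : σ (i + 2) ≤ K := hσK (i + 2) (by omega) (by omega)
    have hσsm : σ (i + 1) < σ (i + 2) := hσmono (i + 1) (i + 2) (by omega) (by omega) (by omega)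
    have hlK : l ≤ K := le_trans (le_of_lt hl2) hσmK
    rcases lt_trichotomy l (σ (i + 1)) with hc | hc | hc
    · -- l < σ (i+1) : use induction hypothesis
      have hih := ih hiI l hl1 hc
      have hmax' := hmax i (by omega) hiI (σ (i + 2)) (by exact hσsm) hσmK
      have hσp1 : 1 ≤ σ i := hσ1le i (by omega) (by omega)
      have hσps : σ i < σ (i + 1) := hσmono i (i + 1) (by omega) (by omega) (by omega)
      have hFp : 0 < F (σ i) := hFpos (σ i) hσp1 (le_trans (le_of_lt hσps) (le_trans (le_of_lt hσsm) hσmK))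
      -- z_{σi, σ(i+1)} < z_{σ(i+1), σ(i+2)}
      have h1 : zc n F (σ i) (σ (i + 1)) < zc n F (σ (i + 1)) (σ (i + 2)) :=
        key3 (n (σ i)) (n (σ (i + 1))) (n (σ (i + 2))) (F (σ i)) (F (σ (i + 1))) (F (σ (i + 2)))
          hFp (hFmono (σ i) (σ (i + 1)) hσp1 hσps (le_trans (le_of_lt hσsm) hσmK))
          (hFmono (σ (i + 1)) (σ (i + 2)) hσs hσsm hσmK) hmax'
      -- z_{l, σ(i+1)} ≤ z_{σ(i+1), σ(i+2)}
      have h2 : zc n F l (σ (i + 1)) ≤ zc n F (σ (i + 1)) (σ (i + 2)) :=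
        le_of_lt (lt_of_le_of_lt hih h1)
      exact key1 (n l) (n (σ (i + 1))) (n (σ (i + 2))) (F l) (F (σ (i + 1))) (F (σ (i + 2)))
        (hFpos l hl1 hlK) (hFmono l (σ (i + 1)) hl1 hc (le_trans (le_of_lt hσsm) hσmK))
        (hFmono (σ (i + 1)) (σ (i + 2)) hσs hσsm hσmK) h2
    · rw [hc]
    · -- σ (i+1) < l < σ (i+2)
      have hmin' := hmin (i + 1) (by omega) hi1I l hc hlK
      exact key2 (n (σ (i + 1))) (n l) (n (σ (i + 2))) (F (σ (i + 1))) (F l) (F (σ (i + 2)))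
        (hFpos (σ (i + 1)) hσs (le_trans (le_of_lt hc) hlK))
        (hFmono (σ (i + 1)) l hσs hc hlK)
        (hFmono l (σ (i + 2)) hl1 hl2 hσmK) hmin'
end

section
/- Let 0 < n_1 < ... < n_K, 0 < F_1 < ... < F_K, u_k(z) = F_k/(n_k+z), u*(z) = max_{k} u_k(z), and let π_1 = 1, π_{i+1} = max(argmin_{l > π_i} z_{π_i,l}) be the recursively defined dominating index sequence ending at π_I = K, with z_{π_0,π_1} := -n_1 and z_{π_I,π_{I+1}} := ∞. Then for each i = 1,...,I and every z in the open interval (z_{π_{i-1},π_i}, z_{π_i,π_{i+1}}), u*(z) = u_{π_i}(z). -/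
open Real

lemma zc_le_iff (n F : ℕ → ℝ) {k l : ℕ} {z : ℝ} (hF : F k < F l)
    (hk : 0 < n k + z) (hl : 0 < n l + z) :
    F k / (n k + z) ≤ F l / (n l + z) ↔ zc n F k l ≤ z := by
  unfold zc
  rw [div_le_div_iff₀ hk hl, div_le_iff₀ (by linarith : (0:ℝ) < F l - F k)]
  constructor <;> intro h <;> nlinarith

lemma zc_le_iff' (n F : ℕ → ℝ) {k l : ℕ} {z : ℝ} (hF : F k < F l)
    (hk : 0 < n k + z) (hl : 0 < n l + z) :
    F l / (n l + z) ≤ F k / (n k + z) ↔ z ≤ zc n F k l := by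
  unfold zc
  rw [div_le_div_iff₀ hl hk, le_div_iff₀ (by linarith : (0:ℝ) < F l - F k)]
  constructor <;> intro h <;> nlinarith

lemma zc_lt_iff (n F : ℕ → ℝ) {k l : ℕ} {z : ℝ} (hF : F k < F l)
    (hk : 0 < n k + z) (hl : 0 < n l + z) :
    F k / (n k + z) < F l / (n l + z) ↔ zc n F k l < z :=
  lt_iff_lt_of_le_iff_le (zc_le_iff' n F hF hk hl)

lemma zc_lt_iff' (n F : ℕ → ℝ) {k l : ℕ} {z : ℝ} (hF : F k < F l)
    (hk : 0 < n k + z) (hl : 0 < n l + z) :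
    F l / (n l + z) < F k / (n k + z) ↔ z < zc n F k l :=
  lt_iff_lt_of_le_iff_le (zc_le_iff n F hF hk hl)

lemma neg_n_lt_zc (n F : ℕ → ℝ) {k l : ℕ} (hF : F k < F l) (hFk : 0 < F k)
    (hn : n k < n l) : -(n k) < zc n F k l := by
  have hd : (0:ℝ) < F l - F k := by linarith
  have h : zc n F k l + n k = F k * (n l - n k) / (F l - F k) := by
    unfold zc; field_simp; ring
  have h2 : 0 < F k * (n l - n k) / (F l - F k) :=
    div_pos (mul_pos hFk (by linarith)) hd
  linarith

/-- The crossing point `z = zc n F k l` is where `u_k` and `u_l` are equal. -/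
lemma zc_eq (n F : ℕ → ℝ) {k l : ℕ} (hF : F k < F l)
    (hk : 0 < n k + zc n F k l) (hl : 0 < n l + zc n F k l) :
    F k / (n k + zc n F k l) = F l / (n l + zc n F k l) :=
  le_antisymm ((zc_le_iff n F hF hk hl).mpr le_rfl)
    ((zc_le_iff' n F hF hk hl).mpr le_rfl)

/-- Three-point transfer: for `j < k < l`, if `zc j k < zc j l` then
`zc j k < zc k l`. -/
lemma zc_transfer (n F : ℕ → ℝ) {j k l : ℕ}
    (hFjk : F j < F k) (hFkl : F k < F l) (hFj : 0 < F j)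
    (hnjk : n j < n k) (hnkl : n k < n l)
    (h : zc n F j k < zc n F j l) : zc n F j k < zc n F k l := by
  set z0 := zc n F j k with hz0
  have hdj : 0 < n j + z0 := by
    have := neg_n_lt_zc n F hFjk hFj hnjk; linarith
  have hdk : 0 < n k + z0 := by linarith
  have hdl : 0 < n l + z0 := by linarith
  have heq : F j / (n j + z0) = F k / (n k + z0) := zc_eq n F hFjk hdj hdk
  have h2 : F l / (n l + z0) < F j / (n j + z0) :=
    (zc_lt_iff' n F (lt_trans hFjk hFkl) hdj hdl).mpr h
  have h3 : F l / (n l + z0) < F k / (n k + z0) := by rw [← heq]; exact h2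
  exact (zc_lt_iff' n F hFkl hdk hdl).mp h3

/-- Characterization of the dominating marginal utility function: on the
interval `(z_{σ_{i-1},σ_i}, z_{σ_i,σ_{i+1}})` (with the conventions
`z_{σ_0,σ_1} = -n_1` and `z_{σ_I,σ_{I+1}} = ∞`), the maximum
`u*(z) = max_{1 ≤ k ≤ K} F_k/(n_k+z)` equals `u_{σ_i}(z)`. -/
theorem dominating_MUF
    (K I : ℕ) (hK : 1 ≤ K) (n F : ℕ → ℝ)
    (hn1 : 0 < n 1)
    (hnmono : ∀ k l, 1 ≤ k → k < l → l ≤ K → n k < n l)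
    (hF1 : 0 < F 1)
    (hFmono : ∀ k l, 1 ≤ k → k < l → l ≤ K → F k < F l)
    (σ : ℕ → ℕ)
    (hI : 1 ≤ I) (hσ1 : σ 1 = 1) (hσI : σ I = K)
    (hσmono : ∀ i j, 1 ≤ i → i < j → j ≤ I → σ i < σ j)
    (hmin : ∀ i, 1 ≤ i → i < I → ∀ l, σ i < l → l ≤ K →
      zc n F (σ i) (σ (i + 1)) ≤ zc n F (σ i) l)
    (hmax : ∀ i, 1 ≤ i → i < I → ∀ l, σ (i + 1) < l → l ≤ K →
      zc n F (σ i) (σ (i + 1)) < zc n F (σ i) l) :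
    ∀ i, 1 ≤ i → i ≤ I → ∀ z : ℝ,
      (if i = 1 then -(n 1) else zc n F (σ (i - 1)) (σ i)) < z →
      (i = I ∨ z < zc n F (σ i) (σ (i + 1))) →
      (Finset.Icc 1 K).sup' (Finset.nonempty_Icc.mpr hK)
          (fun k => F k / (n k + z)) = F (σ i) / (n (σ i) + z) := by
  -- basic helpers
  have hσ1K : ∀ i, 1 ≤ i → i ≤ I → 1 ≤ σ i ∧ σ i ≤ K := by
    intro i h1 h2
    constructor
    · rcases eq_or_lt_of_le h1 with h | h
      · rw [← h, hσ1]
      · rw [← hσ1]; exact le_of_lt (hσmono 1 i le_rfl h h2)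
    · rcases eq_or_lt_of_le h2 with h | h
      · rw [h, hσI]
      · rw [← hσI]; exact le_of_lt (hσmono i I h1 h le_rfl)
  have hFpos : ∀ m, 1 ≤ m → m ≤ K → 0 < F m := by
    intro m h1 h2
    rcases eq_or_lt_of_le h1 with h | h
    · rwa [← h]
    · exact lt_trans hF1 (hFmono 1 m le_rfl h h2)
  have hnge : ∀ m, 1 ≤ m → m ≤ K → n 1 ≤ n m := by
    intro m h1 h2
    rcases eq_or_lt_of_le h1 with h | h
    · rw [← h]
    · exact le_of_lt (hnmono 1 m le_rfl h h2)
  have hden : ∀ m, 1 ≤ m → m ≤ K → ∀ z : ℝ, -(n 1) < z → 0 < n m + z := by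
    intro m h1 h2 z hz
    have := hnge m h1 h2; linarith
  -- step: successive left endpoints increase
  have hstep : ∀ i, 3 ≤ i → i ≤ I →
      zc n F (σ (i - 2)) (σ (i - 1)) < zc n F (σ (i - 1)) (σ i) := by
    intro i h3 hiI
    have hσpp := hσ1K (i - 2) (by omega) (by omega)
    have hσprev := hσ1K (i - 1) (by omega) (by omega)
    have hσcur := hσ1K i (by omega) hiI
    have hσppl : σ (i - 2) < σ (i - 1) := hσmono (i - 2) (i - 1) (by omega) (by omega) (by omega)
    have hσlt : σ (i - 1) < σ i := hσmono (i - 1) i (by omega) (by omega) hiI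
    have hmax' := hmax (i - 2) (by omega) (by omega) (σ i)
      (by rw [(by omega : i - 2 + 1 = i - 1)]; exact hσlt) hσcur.2
    rw [(by omega : i - 2 + 1 = i - 1)] at hmax'
    exact zc_transfer n F
      (hFmono _ _ hσpp.1 hσppl hσprev.2)
      (hFmono _ _ hσprev.1 hσlt hσcur.2)
      (hFpos _ hσpp.1 hσpp.2)
      (hnmono _ _ hσpp.1 hσppl hσprev.2)
      (hnmono _ _ hσprev.1 hσlt hσcur.2) hmax'
  -- all left endpoints lie strictly above -(n 1)
  have hneg : ∀ i, 2 ≤ i → i ≤ I → -(n 1) < zc n F (σ (i - 1)) (σ i) := by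
    intro i
    induction i using Nat.strong_induction_on with
    | _ i IH =>
      intro h2 hiI
      rcases eq_or_lt_of_le h2 with h | h
      · -- i = 2
        have h1 : i - 1 = 1 := by omega
        rw [h1, hσ1]
        have hσcur := hσ1K i (by omega) hiI
        have hσlt : 1 < σ i := by
          rw [← hσ1]; exact hσmono 1 i le_rfl (by omega) hiI
        exact neg_n_lt_zc n F (hFmono 1 (σ i) le_rfl hσlt hσcur.2) hF1
          (hnmono 1 (σ i) le_rfl hσlt hσcur.2)
      · -- i ≥ 3
        have hIH := IH (i - 1) (by omega) (by omega) (by omega)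
        have hs := hstep i (by omega) hiI
        rw [(by omega : i - 1 - 1 = i - 2)] at hIH
        linarith
  -- key lemma: for k < σ i the crossing point zc k (σ i) lies left of the interval
  have key : ∀ i, 1 ≤ i → i ≤ I → ∀ k, 1 ≤ k → k < σ i →
      zc n F k (σ i) ≤ (if i = 1 then -(n 1) else zc n F (σ (i - 1)) (σ i)) := by
    intro i
    induction i using Nat.strong_induction_on with
    | _ i IH =>
      intro hi1 hiI k hk1 hkσ
      rcases eq_or_lt_of_le hi1 with h1 | h1
      · exfalso; rw [← h1, hσ1] at hkσ; omega
      -- now 2 ≤ i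
      have hine1 : i ≠ 1 := by omega
      rw [if_neg hine1]
      have hi1I : 1 ≤ i - 1 := by omega
      have hi1I' : i - 1 < I := by omega
      have hieq : i - 1 + 1 = i := by omega
      have hσprev := hσ1K (i - 1) hi1I (by omega)
      have hσcur := hσ1K i hi1 hiI
      have hσlt : σ (i - 1) < σ i := hσmono (i - 1) i hi1I (by omega) hiI
      have hkK : k ≤ K := by omega
      set zs := zc n F (σ (i - 1)) (σ i) with hzs
      have hFprev : F (σ (i - 1)) < F (σ i) := hFmono _ _ hσprev.1 hσlt hσcur.2
      have hnprev : n (σ (i - 1)) < n (σ i) := hnmono _ _ hσprev.1 hσlt hσcur.2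
      have hFprevpos : 0 < F (σ (i - 1)) := hFpos _ hσprev.1 hσprev.2
      have hzsn1 : -(n 1) < zs := hneg i (by omega) hiI
      have hdprev : 0 < n (σ (i - 1)) + zs := hden _ hσprev.1 hσprev.2 zs hzsn1
      have hdcur : 0 < n (σ i) + zs := hden _ hσcur.1 hσcur.2 zs hzsn1
      have hdk : 0 < n k + zs := hden _ hk1 hkK zs hzsn1
      have hFk : F k < F (σ i) := hFmono _ _ hk1 hkσ hσcur.2
      rcases lt_trichotomy k (σ (i - 1)) with hlt | heq | hgt
      · -- k < σ (i-1): use the induction hypothesis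
        have hi12 : 2 ≤ i - 1 := by
          by_contra hcon
          have : i - 1 = 1 := by omega
          rw [this, hσ1] at hlt; omega
        have hIH := IH (i - 1) (by omega) hi1I (by omega) k hk1 hlt
        rw [if_neg (by omega : i - 1 ≠ 1), (by omega : i - 1 - 1 = i - 2)] at hIH
        have hFk' : F k < F (σ (i - 1)) := hFmono _ _ hk1 hlt hσprev.2
        have hzckprev : zc n F k (σ (i - 1)) < zs :=
          lt_of_le_of_lt hIH (hstep i (by omega) hiI)
        -- at zs, u_k < u_{σ(i-1)} = u_{σ i}
        have h4 : F k / (n k + zs) < F (σ (i - 1)) / (n (σ (i - 1)) + zs) :=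
          (zc_lt_iff n F hFk' hdk hdprev).mpr hzckprev
        have h5 : F (σ (i - 1)) / (n (σ (i - 1)) + zs) = F (σ i) / (n (σ i) + zs) :=
          zc_eq n F hFprev hdprev hdcur
        have h6 : F k / (n k + zs) < F (σ i) / (n (σ i) + zs) := by
          rw [← h5]; exact h4
        exact le_of_lt ((zc_lt_iff n F hFk hdk hdcur).mp h6)
      · -- k = σ (i-1)
        rw [heq]
      · -- σ (i-1) < k: use hmin
        have hmin' := hmin (i - 1) hi1I hi1I' k hgt hkK
        rw [hieq] at hmin'
        have hFk' : F (σ (i - 1)) < F k := hFmono _ _ hσprev.1 hgt hkK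
        have h4 : F k / (n k + zs) ≤ F (σ (i - 1)) / (n (σ (i - 1)) + zs) :=
          (zc_le_iff' n F hFk' hdprev hdk).mpr hmin'
        have h5 : F (σ (i - 1)) / (n (σ (i - 1)) + zs) = F (σ i) / (n (σ i) + zs) :=
          zc_eq n F hFprev hdprev hdcur
        have h6 : F k / (n k + zs) ≤ F (σ i) / (n (σ i) + zs) := by
          rw [← h5]; exact h4
        exact (zc_le_iff n F hFk hdk hdcur).mp h6
  -- main proof
  intro i hi1 hiI z hzL hzR
  have hσcur := hσ1K i hi1 hiI
  have hzn1 : -(n 1) < z := by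
    rcases eq_or_lt_of_le hi1 with h1 | h1
    · rwa [if_pos h1.symm] at hzL
    · rw [if_neg (by omega : i ≠ 1)] at hzL
      have := hneg i (by omega) hiI
      linarith
  have hdcur : 0 < n (σ i) + z := hden _ hσcur.1 hσcur.2 z hzn1
  apply le_antisymm
  · apply Finset.sup'_le
    intro k hk
    rw [Finset.mem_Icc] at hk
    have hdk : 0 < n k + z := hden _ hk.1 hk.2 z hzn1
    rcases lt_trichotomy k (σ i) with hlt | heq | hgt
    · have h1 := key i hi1 hiI k hk.1 hlt
      have h2 : zc n F k (σ i) < z := lt_of_le_of_lt h1 hzL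
      exact le_of_lt ((zc_lt_iff n F (hFmono _ _ hk.1 hlt hσcur.2) hdk hdcur).mpr h2)
    · rw [heq]
    · have hiI' : i < I := by
        rcases eq_or_lt_of_le hiI with h | h
        · exfalso; rw [h, hσI] at hgt; omega
        · exact h
      have hzR' : z < zc n F (σ i) (σ (i + 1)) := by
        rcases hzR with h | h
        · omega
        · exact h
      have h2 : z ≤ zc n F (σ i) k := le_of_lt (lt_of_lt_of_le hzR'
        (hmin i hi1 hiI' k hgt hk.2))
      exact (zc_le_iff' n F (hFmono _ _ hσcur.1 hgt hk.2) hdcur hdk).mpr h2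
  · exact Finset.le_sup' (fun k => F k / (n k + z))
      (Finset.mem_Icc.mpr ⟨hσcur.1, hσcur.2⟩)
end

section
/- In the setting of the one-block expected capacity with g_K > 0, let Λ_k be defined by: Λ_k = ((n_{π_w}+1)/n_{π_s})·(F_{π_s}/F_{π_w}) for 1 ≤ k ≤ π_s; Λ_k = ((n_{π_w}+1)/(n_{π_m}-n_{π_{m-1}}))·((F_{π_m}-F_{π_{m-1}})/F_{π_w}) for π_{m-1} < k ≤ π_m, m = s+1,...,w; and Λ_k = 1 for π_w < k ≤ K. Then for every k = 1,...,K, (n_k+1)/(n_k Λ_k) ≤ 1/p_k. -/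
/-!
Write `q a b = (n b - n a) / (F b - F a)` for the slope between the points `(F a, n a)` and
`(F b, n b)`. Then `zc n F a b = F a * q a b - n a = F b * q a b - n b`, so comparisons of
crossing points are comparisons of slopes. Since `σ (i + 1)` minimises the crossing point from
`σ i`, the crossing points `zc n F (σ (i - 1)) (σ i)` increase with `i`, and `q a b ≤ q a k`
whenever `σ (m - 1) = a < k ≤ σ m = b`.

For `k ≤ σ s` the crossing points are `≤ 0`, which makes `F / n` increase along the chain up to
`σ s`; this is the same slope bound with the origin in place of `a`. Together with
`p k ≤ F k - F a`, `n k ≤ n (σ w)` and `F (σ w) ≤ 1` it gives the claim for `k ≤ σ w`.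
For `k > σ w` the crossing point is `≥ 1`, so `F k * (n a + 1) ≤ F a * (n k + 1)`; combining
this with `p k ≤ F k - F a` and `p k ≤ 1 - F a` yields `p k * (n k + 1) ≤ n k`.
-/

open Real

section Crossing

variable {n F : ℕ → ℝ} {a b j : ℕ}

lemma zc_le_iff_s9 (h : F a < F b) (t : ℝ) :
    zc n F a b ≤ t ↔ F a * (n b + t) ≤ F b * (n a + t) := by
  rw [zc, div_le_iff₀ (sub_pos.2 h)]
  constructor <;> intro <;> linarith

lemma le_zc_iff (h : F a < F b) (t : ℝ) :
    t ≤ zc n F a b ↔ F b * (n a + t) ≤ F a * (n b + t) := by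
  rw [zc, le_div_iff₀ (sub_pos.2 h)]
  constructor <;> intro <;> linarith

lemma zc_eq_left (h : F a ≠ F b) : zc n F a b = F a * ((n b - n a) / (F b - F a)) - n a := by
  rw [zc, mul_div_assoc', div_sub' (sub_ne_zero.2 h.symm)]
  ring_nf

lemma zc_le_zc_iff (ha : 0 < F a) (hab : F a < F b) (haj : F a < F j) :
    zc n F a b ≤ zc n F a j ↔ (n b - n a) * (F j - F a) ≤ (n j - n a) * (F b - F a) := by
  rw [zc_eq_left hab.ne, zc_eq_left haj.ne, sub_le_sub_iff_right, mul_le_mul_iff_right₀ ha,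
    div_le_div_iff₀ (sub_pos.2 hab) (sub_pos.2 haj)]

lemma zc_eq_right (h : F a ≠ F b) : zc n F a b = F b * ((n b - n a) / (F b - F a)) - n b := by
  rw [zc, mul_div_assoc', div_sub' (sub_ne_zero.2 h.symm)]
  ring_nf

lemma zc_mono_of_zc_le (ha : 0 < F a) (hab : F a < F b) (hbj : F b < F j)
    (h : zc n F a b ≤ zc n F a j) : zc n F a b ≤ zc n F b j := by
  rw [zc_le_zc_iff ha hab (hab.trans hbj)] at h
  rw [zc_eq_right hab.ne, zc_eq_left hbj.ne, sub_le_sub_iff_right,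
    mul_le_mul_iff_right₀ (ha.trans hab), div_le_div_iff₀ (sub_pos.2 hab) (sub_pos.2 hbj)]
  linarith

lemma zc_inner_le_of_zc_le (ha : 0 < F a) (haj : F a < F j) (hjb : F j < F b)
    (h : zc n F a b ≤ zc n F a j) : zc n F j b ≤ zc n F a b := by
  rw [zc_le_zc_iff ha (haj.trans hjb) haj] at h
  rw [zc_eq_right hjb.ne, zc_eq_right (haj.trans hjb).ne, sub_le_sub_iff_right,
    mul_le_mul_iff_right₀ (ha.trans (haj.trans hjb)),
    div_le_div_iff₀ (sub_pos.2 hjb) (sub_pos.2 (haj.trans hjb))]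
  linarith

lemma div_le_div_of_zc_nonpos (hab : F a < F b) (ha : 0 < n a) (hb : 0 < n b)
    (h : zc n F a b ≤ 0) : F a / n a ≤ F b / n b := by
  rw [zc_le_iff_s9 hab, add_zero, add_zero] at h
  rw [div_le_div_iff₀ ha hb]
  linarith

end Crossing

lemma exists_sub_one_lt_and_le (σ : ℕ → ℕ) {a b k : ℕ} (hab : a ≤ b) (ha : σ a < k)
    (hb : k ≤ σ b) : ∃ m, a < m ∧ m ≤ b ∧ σ (m - 1) < k ∧ k ≤ σ m := by
  induction b, hab using Nat.le_induction with
  | base => omega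
  | succ b hab ih =>
    by_cases hkb : k ≤ σ b
    · obtain ⟨m, h⟩ := ih hkb
      exact ⟨m, by omega⟩
    · exact ⟨b + 1, by omega, le_rfl, by simpa using hkb, hb⟩

section PartialSums

variable {p F : ℕ → ℝ} {K : ℕ}

lemma strictMonoOn_of_partialSums (hF : ∀ k, F k = ∑ j ∈ Finset.Icc 1 k, p j)
    (hp : ∀ k, 1 ≤ k → k ≤ K → 0 < p k) : StrictMonoOn F (Set.Iic K) := by
  intro a _ b hb hab
  simp only [hF]
  refine Finset.sum_lt_sum_of_subset (Finset.Icc_subset_Icc_right hab.le) (i := b)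
    (by simp; omega) (by simp; omega) (hp b (by omega) hb) fun j hj _ => ?_
  simp only [Finset.mem_Icc] at hj
  exact (hp j hj.1 (hj.2.trans hb)).le

lemma le_sub_of_partialSums (hF : ∀ k, F k = ∑ j ∈ Finset.Icc 1 k, p j)
    (hp : ∀ k, 1 ≤ k → k ≤ K → 0 < p k) {a k : ℕ} (hak : a < k) (hk : k ≤ K) :
    p k ≤ F k - F a := by
  obtain ⟨k, rfl⟩ : ∃ j, k = j + 1 := ⟨k - 1, by omega⟩
  have hsucc : F (k + 1) = F k + p (k + 1) := by
    rw [hF, hF, Finset.sum_Icc_succ_top (by omega)]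
  have := (strictMonoOn_of_partialSums hF hp).monotoneOn (a := a) (b := k)
    (by simp; omega) (by simp; omega) (by omega)
  linarith

end PartialSums

lemma mul_add_one_le_of_slope_le {p Fa Fk Fb Fc na nk nb nc : ℝ} (hp : p ≤ Fk - Fa)
    (hna : 0 ≤ na) (hnak : na ≤ nk) (hnkc : nk ≤ nc) (hnab : na < nb) (hFab : Fa ≤ Fb)
    (hFc : 0 < Fc) (hFc1 : Fc ≤ 1) (hslope : (nb - na) * (Fk - Fa) ≤ (nk - na) * (Fb - Fa)) :
    p * (nk + 1) ≤ nk * ((nc + 1) / (nb - na) * ((Fb - Fa) / Fc)) := by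
  have hΔn : 0 < nb - na := sub_pos.2 hnab
  have hq : 0 ≤ (Fb - Fa) / (nb - na) := div_nonneg (sub_nonneg.2 hFab) hΔn.le
  have hFk : Fk - Fa ≤ (nk - na) * ((Fb - Fa) / (nb - na)) := by
    rw [mul_div_assoc', le_div_iff₀ hΔn]; linarith
  have hnkq : 0 ≤ nk * ((Fb - Fa) / (nb - na)) := mul_nonneg (hna.trans hnak) hq
  calc p * (nk + 1) ≤ (Fk - Fa) * (nk + 1) := by gcongr; linarith
    _ ≤ (nk - na) * ((Fb - Fa) / (nb - na)) * (nk + 1) := by gcongr; linarith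
    _ ≤ nk * ((Fb - Fa) / (nb - na)) * (nc + 1) := by gcongr <;> linarith
    _ ≤ nk * ((Fb - Fa) / (nb - na)) * (nc + 1) / Fc :=
      le_div_self (mul_nonneg hnkq (by linarith)) hFc hFc1
    _ = nk * ((nc + 1) / (nb - na) * ((Fb - Fa) / Fc)) := by ring

lemma mul_add_one_le_of_le_crossing {p Fa Fk na nk : ℝ} (hpk : p ≤ Fk - Fa) (hp1 : p ≤ 1 - Fa)
    (hna : 0 ≤ na) (hnak : na ≤ nk) (hcross : Fk * (na + 1) ≤ Fa * (nk + 1)) :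
    p * (nk + 1) ≤ nk := by
  have h₁ := mul_le_mul_of_nonneg_left hpk (by linarith : 0 ≤ na + 1)
  have h₂ := mul_le_mul_of_nonneg_left hp1 (sub_nonneg.2 hnak)
  linear_combination h₁ + h₂ + hcross + hna

lemma div_le_one_div_of_mul_le {a d p : ℝ} (ha : 0 < a) (hp : 0 < p) (h : p * a ≤ d) :
    a / d ≤ 1 / p := by
  rw [div_le_div_iff₀ (by nlinarith) hp]
  linarith

/-- `σ 1 < ⋯ < σ I` are the active indices (the paper's `π`): `σ (i + 1)` minimises
`zc n F (σ i) l` over `σ i < l ≤ K`. -/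
structure IsActiveChain (K I : ℕ) (n F : ℕ → ℝ) (σ : ℕ → ℕ) : Prop where
  n_one_pos : 0 < n 1
  strictMonoOn_n : StrictMonoOn n (Set.Icc 1 K)
  F_zero : F 0 = 0
  strictMonoOn_F : StrictMonoOn F (Set.Iic K)
  σ_one : σ 1 = 1
  σ_last : σ I = K
  strictMonoOn_σ : StrictMonoOn σ (Set.Icc 1 I)
  zc_le : ∀ i, 1 ≤ i → i < I → ∀ l, σ i < l → l ≤ K →
    zc n F (σ i) (σ (i + 1)) ≤ zc n F (σ i) l

namespace IsActiveChain

variable {K I : ℕ} {n F p : ℕ → ℝ} {σ : ℕ → ℕ} {i j k m s w : ℕ}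

theorem n_pos (hc : IsActiveChain K I n F σ) (hk : 1 ≤ k) (hkK : k ≤ K) : 0 < n k := by
  rcases hk.eq_or_lt with rfl | hk
  · exact hc.n_one_pos
  · exact hc.n_one_pos.trans (hc.strictMonoOn_n ⟨le_rfl, by omega⟩ ⟨by omega, hkK⟩ hk)

theorem n_le (hc : IsActiveChain K I n F σ) (hi : 1 ≤ i) (hij : i ≤ j) (hj : j ≤ K) :
    n i ≤ n j :=
  hc.strictMonoOn_n.monotoneOn ⟨hi, hij.trans hj⟩ ⟨hi.trans hij, hj⟩ hij

theorem F_lt (hc : IsActiveChain K I n F σ) (hij : i < j) (hj : j ≤ K) : F i < F j :=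
  hc.strictMonoOn_F (by simp; omega) (by simpa) hij

theorem F_pos (hc : IsActiveChain K I n F σ) (hk : 1 ≤ k) (hkK : k ≤ K) : 0 < F k :=
  hc.F_zero ▸ hc.F_lt hk hkK

theorem F_le_one (hc : IsActiveChain K I n F σ) (hFK : F K = 1) (hk : k ≤ K) : F k ≤ 1 :=
  hFK ▸ hc.strictMonoOn_F.monotoneOn (by simpa) (by simp) hk

theorem σ_lt (hc : IsActiveChain K I n F σ) (hi : 1 ≤ i) (hij : i < j) (hj : j ≤ I) :
    σ i < σ j :=
  hc.strictMonoOn_σ ⟨hi, by omega⟩ ⟨by omega, hj⟩ hij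

theorem σ_mono (hc : IsActiveChain K I n F σ) (hi : 1 ≤ i) (hij : i ≤ j) (hj : j ≤ I) :
    σ i ≤ σ j :=
  hc.strictMonoOn_σ.monotoneOn ⟨hi, hij.trans hj⟩ ⟨hi.trans hij, hj⟩ hij

theorem one_le_σ (hc : IsActiveChain K I n F σ) (hi : 1 ≤ i) (hiI : i ≤ I) : 1 ≤ σ i :=
  hc.σ_one ▸ hc.σ_mono le_rfl hi hiI

theorem σ_le (hc : IsActiveChain K I n F σ) (hi : 1 ≤ i) (hiI : i ≤ I) : σ i ≤ K :=
  hc.σ_last ▸ hc.σ_mono hi hiI le_rfl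

theorem zc_sub_one_le (hc : IsActiveChain K I n F σ) (hm : 2 ≤ m) (hmI : m ≤ I)
    (hk : σ (m - 1) < k) (hkK : k ≤ K) :
    zc n F (σ (m - 1)) (σ m) ≤ zc n F (σ (m - 1)) k := by
  have h := hc.zc_le (m - 1) (by omega) (by omega) k hk hkK
  rwa [Nat.sub_add_cancel (by omega)] at h

theorem zc_monotoneOn (hc : IsActiveChain K I n F σ) :
    MonotoneOn (fun i => zc n F (σ (i - 1)) (σ i)) (Set.Icc 2 I) := by
  refine monotoneOn_of_le_succ Set.ordConnected_Icc fun i _ hi hi' => ?_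
  simp only [Order.succ_eq_add_one, Set.mem_Icc, Nat.add_sub_cancel] at hi hi' ⊢
  have hlt := hc.σ_lt (i := i - 1) (j := i) (by omega) (by omega) (by omega)
  exact zc_mono_of_zc_le
    (hc.F_pos (hc.one_le_σ (by omega) (by omega)) (hc.σ_le (by omega) (by omega)))
    (hc.F_lt hlt (hc.σ_le (by omega) (by omega)))
    (hc.F_lt (hc.σ_lt (by omega) (lt_add_one i) hi'.2) (hc.σ_le (by omega) hi'.2))
    (hc.zc_sub_one_le hi.1 hi.2 (hc.σ_lt (by omega) (by omega) hi'.2)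
      (hc.σ_le (by omega) hi'.2))

theorem div_le_div_σ_of_le (hc : IsActiveChain K I n F σ) (hs1 : 1 ≤ s) (hsI : s ≤ I)
    (hs : s = 1 ∨ zc n F (σ (s - 1)) (σ s) ≤ 0) (hk : 1 ≤ k) (hks : k ≤ σ s) :
    F k / n k ≤ F (σ s) / n (σ s) := by
  have hσ_pos {i} (hi : 1 ≤ i) (his : i ≤ s) : 0 < n (σ i) :=
    hc.n_pos (hc.one_le_σ hi (his.trans hsI)) (hc.σ_le hi (his.trans hsI))
  have hneg {i} (hi : 2 ≤ i) (his : i ≤ s) : zc n F (σ (i - 1)) (σ i) ≤ 0 := by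
    rcases hs with rfl | hs
    · omega
    · exact (hc.zc_monotoneOn ⟨hi, by omega⟩ ⟨by omega, hsI⟩ his).trans hs
  have hchain : MonotoneOn (fun i => F (σ i) / n (σ i)) (Set.Icc 1 s) := by
    refine monotoneOn_of_le_succ Set.ordConnected_Icc fun i _ hi hi' => ?_
    simp only [Order.succ_eq_add_one, Set.mem_Icc] at hi hi' ⊢
    have h := hneg (i := i + 1) (by omega) hi'.2
    rw [Nat.add_sub_cancel] at h
    exact div_le_div_of_zc_nonpos
      (hc.F_lt (hc.σ_lt hi.1 (lt_add_one i) (by omega)) (hc.σ_le (by omega) (by omega)))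
      (hσ_pos hi.1 hi.2) (hσ_pos (by omega) hi'.2) h
  rcases hk.eq_or_lt with rfl | hk
  · rw [← hc.σ_one]
    exact hchain ⟨le_rfl, hs1⟩ ⟨hs1, le_rfl⟩ hs1
  obtain ⟨m, h1m, hms, hmk, hkm⟩ := exists_sub_one_lt_and_le σ hs1 (by rwa [hc.σ_one]) hks
  have hmK : σ m ≤ K := hc.σ_le (by omega) (by omega)
  refine le_trans ?_ (hchain ⟨by omega, hms⟩ ⟨hs1, le_rfl⟩ hms)
  rcases hkm.eq_or_lt with rfl | hkm
  · exact le_rfl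
  have hm1 : 1 ≤ σ (m - 1) := hc.one_le_σ (by omega) (by omega)
  exact div_le_div_of_zc_nonpos (hc.F_lt hkm hmK) (hc.n_pos (by omega) (by omega))
    (hσ_pos (by omega) hms)
    ((zc_inner_le_of_zc_le (hc.F_pos hm1 (by omega)) (hc.F_lt hmk (by omega)) (hc.F_lt hkm hmK)
      (hc.zc_sub_one_le (by omega) (by omega) hmk (by omega))).trans (hneg (by omega) hms))

theorem mul_add_one_le_of_le_σ (hc : IsActiveChain K I n F σ) (hFK : F K = 1)
    (hpk : p k ≤ F k) (hs1 : 1 ≤ s) (hsw : s ≤ w) (hwI : w ≤ I)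
    (hs : s = 1 ∨ zc n F (σ (s - 1)) (σ s) ≤ 0) (hk : 1 ≤ k) (hks : k ≤ σ s) :
    p k * (n k + 1) ≤ n k * ((n (σ w) + 1) / n (σ s) * (F (σ s) / F (σ w))) := by
  have hw1 : 1 ≤ w := hs1.trans hsw
  have hσs : 1 ≤ σ s := hc.one_le_σ hs1 (hsw.trans hwI)
  have hσsw : σ s ≤ σ w := hc.σ_mono hs1 hsw hwI
  have hσwK : σ w ≤ K := hc.σ_le hw1 hwI
  have hratio := hc.div_le_div_σ_of_le hs1 (hsw.trans hwI) hs hk hks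
  rw [div_le_div_iff₀ (hc.n_pos hk (by omega)) (hc.n_pos hσs (by omega))] at hratio
  -- the origin plays the role of the left end point of the segment
  simpa using mul_add_one_le_of_slope_le (Fa := 0) (na := 0) (by simpa using hpk) le_rfl
    (hc.n_pos hk (by omega)).le (hc.n_le hk (hks.trans hσsw) hσwK) (hc.n_pos hσs (by omega))
    (hc.F_pos hσs (by omega)).le (hc.F_pos (hc.one_le_σ hw1 hwI) hσwK) (hc.F_le_one hFK hσwK)
    (by linarith)

theorem mul_add_one_le_of_mem_segment (hc : IsActiveChain K I n F σ) (hFK : F K = 1)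
    (hpk : ∀ a < k, p k ≤ F k - F a) (hm : 2 ≤ m) (hmw : m ≤ w) (hwI : w ≤ I)
    (hmk : σ (m - 1) < k) (hkm : k ≤ σ m) :
    p k * (n k + 1) ≤ n k * ((n (σ w) + 1) / (n (σ m) - n (σ (m - 1))) *
      ((F (σ m) - F (σ (m - 1))) / F (σ w))) := by
  have hσwK : σ w ≤ K := hc.σ_le (by omega) hwI
  have hσmw : σ m ≤ σ w := hc.σ_mono (by omega) hmw hwI
  have ha : 1 ≤ σ (m - 1) := hc.one_le_σ (by omega) (by omega)
  have hab : σ (m - 1) < σ m := hc.σ_lt (by omega) (by omega) (by omega)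
  exact mul_add_one_le_of_slope_le (hpk _ hmk) (hc.n_pos ha (by omega)).le
    (hc.n_le ha hmk.le (by omega)) (hc.n_le (by omega) (hkm.trans hσmw) hσwK)
    (hc.strictMonoOn_n ⟨ha, by omega⟩ ⟨by omega, by omega⟩ hab) (hc.F_lt hab (by omega)).le
    (hc.F_pos (by omega) hσwK) (hc.F_le_one hFK hσwK)
    ((zc_le_zc_iff (hc.F_pos ha (by omega)) (hc.F_lt hab (by omega))
      (hc.F_lt hmk (by omega))).1 (hc.zc_sub_one_le hm (by omega) hmk (by omega)))

theorem mul_add_one_le_of_one_le_zc (hc : IsActiveChain K I n F σ) (hFK : F K = 1)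
    (hpk : ∀ a < k, p k ≤ F k - F a) (hkK : k ≤ K) (hm : 2 ≤ m) (hmI : m ≤ I)
    (hmk : σ (m - 1) < k) (hz : 1 ≤ zc n F (σ (m - 1)) (σ m)) :
    p k * (n k + 1) ≤ n k := by
  have ha : 1 ≤ σ (m - 1) := hc.one_le_σ (by omega) (by omega)
  refine mul_add_one_le_of_le_crossing (hpk _ hmk) ?_ (hc.n_pos ha (by omega)).le
    (hc.n_le ha hmk.le hkK)
    ((le_zc_iff (hc.F_lt hmk hkK) 1).1 (hz.trans (hc.zc_sub_one_le hm hmI hmk hkK)))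
  linarith [hpk _ hmk, hc.F_le_one hFK hkK]

end IsActiveChain

theorem additive_gap_key_lemma_general
    (K I s w : ℕ) (n p : ℕ → ℝ)
    (hn1 : 0 < n 1)
    (hnmono : ∀ k l, 1 ≤ k → k < l → l ≤ K → n k < n l)
    (hp : ∀ k, 1 ≤ k → k ≤ K → 0 < p k)
    (hpsum : ∑ k ∈ Finset.Icc 1 K, p k = 1)
    (F : ℕ → ℝ) (hF : ∀ k, F k = ∑ j ∈ Finset.Icc 1 k, p j)
    (σ : ℕ → ℕ)
    (hσ1 : σ 1 = 1) (hσI : σ I = K)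
    (hσmono : ∀ i j, 1 ≤ i → i < j → j ≤ I → σ i < σ j)
    (hmin : ∀ i, 1 ≤ i → i < I → ∀ l, σ i < l → l ≤ K →
      zc n F (σ i) (σ (i + 1)) ≤ zc n F (σ i) l)
    (hs1 : 1 ≤ s) (hsI : s ≤ I)
    (hsle : s = 1 ∨ zc n F (σ (s - 1)) (σ s) ≤ 0)
    (hw1 : 1 ≤ w) (hwI : w ≤ I)
    (hwmax : ∀ i, w < i → i ≤ I → 1 ≤ zc n F (σ (i - 1)) (σ i))
    (Λ : ℕ → ℝ)
    (hΛ1 : ∀ k, 1 ≤ k → k ≤ σ s →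
      Λ k = (n (σ w) + 1) / n (σ s) * (F (σ s) / F (σ w)))
    (hΛ2 : ∀ m, s + 1 ≤ m → m ≤ w → ∀ k, σ (m - 1) < k → k ≤ σ m →
      Λ k = (n (σ w) + 1) / (n (σ m) - n (σ (m - 1))) *
        ((F (σ m) - F (σ (m - 1))) / F (σ w)))
    (hΛ3 : ∀ k, σ w < k → k ≤ K → Λ k = 1) :
    ∀ k, 1 ≤ k → k ≤ K → (n k + 1) / (n k * Λ k) ≤ 1 / p k := by
  have hc : IsActiveChain K I n F σ :=
    { n_one_pos := hn1
      strictMonoOn_n := fun a ha b hb hab => hnmono a b ha.1 hab hb.2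
      F_zero := by simp [hF]
      strictMonoOn_F := strictMonoOn_of_partialSums hF hp
      σ_one := hσ1
      σ_last := hσI
      strictMonoOn_σ := fun i hi j hj hij => hσmono i j hi.1 hij hj.2
      zc_le := hmin }
  have hFK : F K = 1 := (hF K).trans hpsum
  have hsw : s ≤ w := by
    by_contra! hws
    have := hwmax s hws hsI
    rcases hsle with rfl | hsle <;> [omega; linarith]
  intro k hk1 hkK
  have hpk : ∀ a < k, p k ≤ F k - F a := fun a ha => le_sub_of_partialSums hF hp ha hkK
  refine div_le_one_div_of_mul_le (by linarith [hc.n_pos hk1 hkK]) (hp k hk1 hkK) ?_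
  rcases le_or_gt k (σ s) with hks | hks
  · rw [hΛ1 k hk1 hks]
    exact hc.mul_add_one_le_of_le_σ hFK (by simpa [hc.F_zero] using hpk 0 hk1) hs1 hsw hwI hsle
      hk1 hks
  rcases le_or_gt k (σ w) with hkw | hkw
  · obtain ⟨m, hsm, hmw, hmk, hkm⟩ := exists_sub_one_lt_and_le σ hsw hks hkw
    rw [hΛ2 m hsm hmw k hmk hkm]
    exact hc.mul_add_one_le_of_mem_segment hFK hpk (by omega) hmw hwI hmk hkm
  · obtain ⟨m, hwm, hmI, hmk, -⟩ := exists_sub_one_lt_and_le σ hwI hkw (hσI ▸ hkK)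
    rw [hΛ3 k hkw hkK, mul_one]
    exact hc.mul_add_one_le_of_one_le_zc hFK hpk hkK (by omega) hmI hmk (hwmax m hwm hmI)

/-- Key lemma for the worst-case additive gap: with `Λ_k` defined from the
active indices `σ_s, …, σ_w`, one has `(n_k+1)/(n_k Λ_k) ≤ 1/p_k` for every
`k = 1, …, K`. -/
theorem additive_gap_key_lemma
    (K I s w : ℕ) (hK : 1 ≤ K) (n p : ℕ → ℝ)
    (hn1 : 0 < n 1)
    (hnmono : ∀ k l, 1 ≤ k → k < l → l ≤ K → n k < n l)
    (hp : ∀ k, 1 ≤ k → k ≤ K → 0 < p k)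
    (hpsum : ∑ k ∈ Finset.Icc 1 K, p k = 1)
    (F : ℕ → ℝ) (hF : ∀ k, F k = ∑ j ∈ Finset.Icc 1 k, p j)
    (σ : ℕ → ℕ)
    (hI : 1 ≤ I) (hσ1 : σ 1 = 1) (hσI : σ I = K)
    (hσmono : ∀ i j, 1 ≤ i → i < j → j ≤ I → σ i < σ j)
    (hmin : ∀ i, 1 ≤ i → i < I → ∀ l, σ i < l → l ≤ K →
      zc n F (σ i) (σ (i + 1)) ≤ zc n F (σ i) l)
    (hmax : ∀ i, 1 ≤ i → i < I → ∀ l, σ (i + 1) < l → l ≤ K →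
      zc n F (σ i) (σ (i + 1)) < zc n F (σ i) l)
    (hs1 : 1 ≤ s) (hsI : s ≤ I)
    (hsle : s = 1 ∨ zc n F (σ (s - 1)) (σ s) ≤ 0)
    (hsmax : ∀ i, s < i → i ≤ I → 0 < zc n F (σ (i - 1)) (σ i))
    (hw1 : 1 ≤ w) (hwI : w ≤ I)
    (hwlt : w = 1 ∨ zc n F (σ (w - 1)) (σ w) < 1)
    (hwmax : ∀ i, w < i → i ≤ I → 1 ≤ zc n F (σ (i - 1)) (σ i))
    (Λ : ℕ → ℝ)
    (hΛ1 : ∀ k, 1 ≤ k → k ≤ σ s →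
      Λ k = (n (σ w) + 1) / n (σ s) * (F (σ s) / F (σ w)))
    (hΛ2 : ∀ m, s + 1 ≤ m → m ≤ w → ∀ k, σ (m - 1) < k → k ≤ σ m →
      Λ k = (n (σ w) + 1) / (n (σ m) - n (σ (m - 1))) *
        ((F (σ m) - F (σ (m - 1))) / F (σ w)))
    (hΛ3 : ∀ k, σ w < k → k ≤ K → Λ k = 1) :
    ∀ k, 1 ≤ k → k ≤ K → (n k + 1) / (n k * Λ k) ≤ 1 / p k :=
  additive_gap_key_lemma_general K I s w n p hn1 hnmono hp hpsum F hF σ hσ1 hσI hσmono hmin hs1 hsI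
    hsle hw1 hwI hwmax Λ hΛ1 hΛ2 hΛ3
end

section
/- For a slow-fading Gaussian channel with K distinct positive fading states, the multiplicative gap M(F_G,1) = C_erg(F_G)/C_exp(F_G,1) satisfies M(F_G,1) ≤ K. -/
/-!
Putting all the power on state `k` (`β_j = 1` for `j ≥ k`, `β_j = 0` before) is feasible and
achieves `F_k log(1 + g_k) ≥ p_k log(1 + g_k)`, while `β = 0` achieves `0`. So each of the `K`
terms of the ergodic capacity is at most the one-block expected capacity.
-/

open Real

/-- Achievable expected-rate values of the one-block power allocation
program: maximize `∑_k F_k log((1+β_k g_k)/(1+β_{k-1} g_k))` over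
`0 = β_0 ≤ β_1 ≤ ⋯ ≤ β_K ≤ 1`. -/
def CexpSet (K : ℕ) (g F : ℕ → ℝ) : Set ℝ :=
  {r | ∃ β : ℕ → ℝ, β 0 = 0 ∧ (∀ k, 1 ≤ k → k ≤ K → β (k - 1) ≤ β k) ∧ β K ≤ 1 ∧
    r = ∑ k ∈ Finset.Icc 1 K,
      F k * Real.log ((1 + β k * g k) / (1 + β (k - 1) * g k))}

open Finset

lemma zero_mem_CexpSet (K : ℕ) (g F : ℕ → ℝ) : 0 ∈ CexpSet K g F :=
  ⟨0, rfl, fun _ _ _ => le_rfl, zero_le_one, by simp⟩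

lemma mul_log_one_add_mem_CexpSet {K k : ℕ} (g F : ℕ → ℝ) (hk : k ∈ Icc 1 K) :
    F k * log (1 + g k) ∈ CexpSet K g F := by
  obtain ⟨hk1, hkK⟩ := mem_Icc.mp hk
  refine ⟨fun j => if k ≤ j then 1 else 0, by simp; omega, fun j _ _ => ?_, by simp [hkK], ?_⟩
  · dsimp only
    split_ifs <;> first | omega | norm_num
  · rw [sum_eq_single_of_mem k hk]
    · simp [show ¬k ≤ k - 1 by omega]
    · intro j _ hjk
      have hβ : (k ≤ j - 1 ↔ k ≤ j) := by omega
      simp [hβ]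

lemma mul_log_one_add_le_sSup_CexpSet {K k : ℕ} {g p F : ℕ → ℝ} (hk : k ∈ Icc 1 K)
    (hp : 0 ≤ p k) (hpF : p k ≤ F k) (hb : BddAbove (CexpSet K g F)) :
    p k * log (1 + g k) ≤ sSup (CexpSet K g F) := by
  rcases le_total 0 (log (1 + g k)) with hlog | hlog
  · calc p k * log (1 + g k) ≤ F k * log (1 + g k) := mul_le_mul_of_nonneg_right hpF hlog
      _ ≤ sSup (CexpSet K g F) := le_csSup hb (mul_log_one_add_mem_CexpSet g F hk)
  · exact (mul_nonpos_of_nonneg_of_nonpos hp hlog).trans (le_csSup hb (zero_mem_CexpSet K g F))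

theorem multiplicative_gap_le_K_general
    (K : ℕ) (g p : ℕ → ℝ)
    (hp : ∀ k, 1 ≤ k → k ≤ K → 0 < p k)
    (F : ℕ → ℝ) (hF : ∀ k, F k = ∑ j ∈ Finset.Icc 1 k, p j) :
    (∑ k ∈ Finset.Icc 1 K, p k * Real.log (1 + g k)) / sSup (CexpSet K g F) ≤
      K := by
  by_cases hb : BddAbove (CexpSet K g F)
  swap
  · rw [Real.sSup_of_not_bddAbove hb, div_zero]
    exact K.cast_nonneg
  have hp0 : ∀ k ∈ Icc 1 K, 0 ≤ p k := fun k hk => (hp k (mem_Icc.mp hk).1 (mem_Icc.mp hk).2).le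
  have hterm : ∀ k ∈ Icc 1 K, p k * log (1 + g k) ≤ sSup (CexpSet K g F) := by
    intro k hk
    obtain ⟨hk1, hkK⟩ := mem_Icc.mp hk
    refine mul_log_one_add_le_sSup_CexpSet hk (hp0 k hk) ?_ hb
    rw [hF k]
    exact single_le_sum (fun j hj => hp0 j (Icc_subset_Icc_right hkK hj)) (mem_Icc.mpr ⟨hk1, le_rfl⟩)
  refine div_le_of_le_mul₀ (le_csSup hb (zero_mem_CexpSet K g F)) K.cast_nonneg ?_
  simpa using sum_le_card_nsmul _ _ _ hterm

/-- Worst-case multiplicative gap: the ratio between the ergodic capacity and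
the one-block expected capacity is at most `K`. -/
theorem multiplicative_gap_le_K
    (K : ℕ) (hK : 1 ≤ K) (g p : ℕ → ℝ)
    (hg : ∀ k l, 1 ≤ k → k < l → l ≤ K → g l < g k) (hgK : 0 < g K)
    (hp : ∀ k, 1 ≤ k → k ≤ K → 0 < p k)
    (hpsum : ∑ k ∈ Finset.Icc 1 K, p k = 1)
    (F : ℕ → ℝ) (hF : ∀ k, F k = ∑ j ∈ Finset.Icc 1 k, p j) :
    (∑ k ∈ Finset.Icc 1 K, p k * Real.log (1 + g k)) / sSup (CexpSet K g F) ≤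
      K :=
  multiplicative_gap_le_K_general K g p hp F hF
end

section
/- Fix K ≥ 2 and for d > max{K-1, 2} define g_k = ∑_{j=1}^{K-k+1} d^j = d(d^{K-k+1}-1)/(d-1) for k = 1,...,K, with uniform probabilities p_k = 1/K. Then the additive gap A(F_G^{(d)},1) = C_erg(F_G^{(d)}) - C_exp(F_G^{(d)},1) converges to log K as d → ∞. -/
/-!
Summation by parts turns the one-block rate into
`(1/K) (∑_{1 ≤ k < K} (k log (1 + β_k g_k) - (k+1) log (1 + β_k g_{k+1})) + K log (1 + β_K g_K))`.
With `t = g_{k+1}/g_k`, weighted AM-GM (concavity of `log`) bounds the `k`-th bracket by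
`k log k - (k+1) log (k+1) - k log t - log (1 - t)`, and `β_k = k / g_{k+1}` attains it up to
`k log (1 + t/k)`; both errors vanish as `t → 0`. The main terms telescope to
`∑_k log g_k - K log K + K log ((1 + g_K)/g_K)`, which is `K (C_erg - log K) + o(1)` once all
`g_k → ∞`. For `g_k = ∑_{j ≤ K-k+1} d^j` one has `g_k = d (1 + g_{k+1})`, so `g_{k+1}/g_k ≤ 1/d`.
-/

open Real Filter

open Finset Topology

lemma mul_log_div_add_log_le {κ A B : ℝ} (hκ : 0 < κ) (hA : 0 < A) (hB : 0 < B) :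
    κ * log (A / κ) + log B ≤ (κ + 1) * log ((A + B) / (κ + 1)) := by
  have hκ1 : 0 < κ + 1 := by linarith
  have h := strictConcaveOn_log_Ioi.concaveOn.2 (Set.mem_Ioi.2 (div_pos hA hκ)) (Set.mem_Ioi.2 hB)
    (div_nonneg hκ.le hκ1.le) (div_nonneg zero_le_one hκ1.le) (by field_simp)
  have hmean : κ / (κ + 1) * (A / κ) + 1 / (κ + 1) * B = (A + B) / (κ + 1) := by field_simp
  simp only [smul_eq_mul, hmean] at h
  calc κ * log (A / κ) + log B
      = (κ + 1) * (κ / (κ + 1) * log (A / κ) + 1 / (κ + 1) * log B) := by field_simp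
    _ ≤ (κ + 1) * log ((A + B) / (κ + 1)) := by gcongr

lemma mul_log_one_add_sub_le {κ t x : ℝ} (hκ : 0 < κ) (ht₀ : 0 < t) (ht₁ : t < 1)
    (hx : 0 ≤ x) :
    κ * log (1 + x) - (κ + 1) * log (1 + t * x) ≤
      κ * log κ - (κ + 1) * log (κ + 1) - κ * log t - log (1 - t) := by
  have h := mul_log_div_add_log_le hκ (A := t * (1 + x)) (B := 1 - t) (by positivity)
    (by linarith)
  rw [show t * (1 + x) + (1 - t) = 1 + t * x by ring, log_div (by positivity) hκ.ne',
    log_div (by positivity) (by linarith), log_mul ht₀.ne' (by positivity)] at h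
  linarith

lemma sum_Icc_mul_sub_eq (u : ℕ → ℕ → ℝ) (N : ℕ) :
    ∑ k ∈ Icc 1 N, (k : ℝ) * (u k k - u (k - 1) k) =
      ∑ k ∈ range N, ((k : ℝ) * u k k - (k + 1) * u k (k + 1)) + N * u N N := by
  induction N with
  | zero => simp
  | succ n ih =>
    rw [sum_Icc_succ_top (by omega), ih, sum_range_succ, Nat.add_sub_cancel]
    push_cast
    ring

lemma sum_Ico_mul_sub_eq (x : ℕ → ℝ) {N : ℕ} (hN : 1 ≤ N) :
    ∑ k ∈ Ico 1 N, (k : ℝ) * (x (k + 1) - x k) = N * x N - ∑ k ∈ Icc 1 N, x k := by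
  induction N, hN using Nat.le_induction with
  | base => simp
  | succ n hn ih =>
    rw [sum_Ico_succ_top hn, ih, sum_Icc_succ_top (by omega)]
    push_cast
    ring

lemma nonneg_of_zero_of_step_le {K : ℕ} {β : ℕ → ℝ} (hβ₀ : β 0 = 0)
    (hmono : ∀ k, 1 ≤ k → k ≤ K → β (k - 1) ≤ β k) : ∀ k ≤ K, 0 ≤ β k := by
  intro k hk
  induction k with
  | zero => exact hβ₀.ge
  | succ n ih => exact (ih (by omega)).trans (hmono (n + 1) (by omega) hk)

section Gains

variable {K : ℕ} {g : ℕ → ℝ}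

lemma sum_rate_eq_sum_Ico (hK : 1 ≤ K) (hg : ∀ k ∈ Icc 1 K, 0 < g k) {β : ℕ → ℝ} (hβ₀ : β 0 = 0)
    (hβ : ∀ k ≤ K, 0 ≤ β k) :
    ∑ k ∈ Icc 1 K, (k / K : ℝ) * log ((1 + β k * g k) / (1 + β (k - 1) * g k)) =
      (1 / K) * (∑ k ∈ Ico 1 K, (k * log (1 + β k * g k) - (k + 1) * log (1 + β k * g (k + 1)))
        + K * log (1 + β K * g K)) := by
  have hterm : ∀ k ∈ Icc 1 K,
      (k / K : ℝ) * log ((1 + β k * g k) / (1 + β (k - 1) * g k)) =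
        (1 / K) * (k * (log (1 + β k * g k) - log (1 + β (k - 1) * g k))) := by
    intro k hk
    have hk := mem_Icc.1 hk
    have hgk := hg k (mem_Icc.2 hk)
    have := hβ k hk.2
    have := hβ (k - 1) (by omega)
    rw [log_div (by positivity) (by positivity)]
    ring
  rw [sum_congr rfl hterm, ← mul_sum,
    sum_Icc_mul_sub_eq (fun i k => log (1 + β i * g k)), sum_range_eq_add_Ico _ hK]
  simp [hβ₀]

/-- Up to the error `e k`, the `k`-th summand is the maximum over `β_k` of the `k`-th bracket in
`sum_rate_eq_sum_Ico`, asymptotically as `g (k + 1) / g k → 0`. -/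
noncomputable def cexpApprox (K : ℕ) (g e : ℕ → ℝ) : ℝ :=
  (1 / K) * (∑ k ∈ Ico 1 K,
      (k * log k - (k + 1) * log (k + 1) - k * log (g (k + 1) / g k) + e k) + K * log (1 + g K))

lemma le_cexpApprox (hK : 1 ≤ K) (hg : ∀ k ∈ Icc 1 K, 0 < g k)
    (hanti : ∀ k ∈ Ico 1 K, g (k + 1) < g k) {r : ℝ} (hr : r ∈ CexpSet K g (fun k => k / K)) :
    r ≤ cexpApprox K g (fun k => -log (1 - g (k + 1) / g k)) := by
  obtain ⟨β, hβ₀, hmono, hβK, rfl⟩ := hr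
  have hβ := nonneg_of_zero_of_step_le hβ₀ hmono
  rw [sum_rate_eq_sum_Ico hK hg hβ₀ hβ, cexpApprox]
  have hgK := hg K (by simp [hK])
  gcongr with k hk
  · have hk := mem_Ico.1 hk
    have hgk := hg k (mem_Icc.2 ⟨hk.1, hk.2.le⟩)
    have hgk' := hg (k + 1) (mem_Icc.2 ⟨by omega, hk.2⟩)
    have h := mul_log_one_add_sub_le (κ := k) (t := g (k + 1) / g k) (x := β k * g k)
      (by exact_mod_cast hk.1) (by positivity) ((div_lt_one hgk).2 (hanti k (mem_Ico.2 hk)))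
      (mul_nonneg (hβ k hk.2.le) hgk.le)
    rw [show g (k + 1) / g k * (β k * g k) = β k * g (k + 1) by field_simp] at h
    linarith
  · have := hβ K le_rfl
    positivity
  · exact mul_le_of_le_one_left hgK.le hβK

lemma cexpApprox_mem (hK : 1 ≤ K) (hg : ∀ k ∈ Icc 1 K, 0 < g k)
    (hanti : ∀ k ∈ Ico 1 K, g (k + 1) ≤ g k) (htop : (K : ℝ) - 1 ≤ g K) :
    cexpApprox K g (fun k => k * log (1 + g (k + 1) / g k / k)) ∈
      CexpSet K g (fun k => k / K) := by
  set β : ℕ → ℝ := fun k => if k < K then k / g (k + 1) else 1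
  have hβ_lt : ∀ k < K, β k = k / g (k + 1) := fun k hk => if_pos hk
  have hβK : β K = 1 := if_neg (lt_irrefl K)
  have hβ₀ : β 0 = 0 := by simp [hβ_lt 0 (by omega)]
  have hβ : ∀ k ≤ K, 0 ≤ β k := by
    intro k hk
    rcases hk.lt_or_eq with hk | rfl
    · rw [hβ_lt k hk]
      exact div_nonneg k.cast_nonneg (hg (k + 1) (mem_Icc.2 ⟨by omega, hk⟩)).le
    · rw [hβK]; exact zero_le_one
  refine ⟨β, hβ₀, fun k hk₁ hkK => ?_, hβK.le, ?_⟩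
  · rw [hβ_lt (k - 1) (by omega)]
    rcases hkK.lt_or_eq with hk | rfl
    · rw [hβ_lt k hk, Nat.sub_add_cancel hk₁]
      exact div_le_div₀ k.cast_nonneg (by exact_mod_cast k.sub_le 1)
        (hg (k + 1) (mem_Icc.2 ⟨by omega, hk⟩)) (hanti k (mem_Ico.2 ⟨hk₁, hk⟩))
    · rw [hβK, Nat.sub_add_cancel hk₁, div_le_one (hg _ (mem_Icc.2 ⟨hk₁, le_rfl⟩)),
        Nat.cast_sub hk₁, Nat.cast_one]
      exact htop
  rw [sum_rate_eq_sum_Ico hK hg hβ₀ hβ, cexpApprox, hβK, one_mul]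
  congr 2
  refine sum_congr rfl fun k hk => ?_
  have hk := mem_Ico.1 hk
  have hk₀ : (0 : ℝ) < k := by exact_mod_cast hk.1
  have ha := hg k (mem_Icc.2 ⟨hk.1, hk.2.le⟩)
  have hc := hg (k + 1) (mem_Icc.2 ⟨by omega, hk.2⟩)
  have hsplit : 1 + k / g (k + 1) * g k = k / (g (k + 1) / g k) * (1 + g (k + 1) / g k / k) := by
    field_simp
    ring
  rw [hβ_lt k hk.2, div_mul_cancel₀ _ hc.ne', hsplit, log_mul (by positivity) (by positivity),
    log_div hk₀.ne' (by positivity), add_comm 1 (k : ℝ)]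
  ring

lemma sum_log_one_add_sub_cexpApprox (hK : 1 ≤ K) (hg : ∀ k ∈ Icc 1 K, 0 < g k) (e : ℕ → ℝ) :
    ∑ k ∈ Icc 1 K, (1 / K : ℝ) * log (1 + g k) - cexpApprox K g e =
      log K + (1 / K) * (∑ k ∈ Icc 1 K, log (1 + (g k)⁻¹) - K * log (1 + (g K)⁻¹) -
        ∑ k ∈ Ico 1 K, e k) := by
  have htel : ∑ k ∈ Ico 1 K, ((k : ℝ) * log k - (k + 1) * log (k + 1)) = -(K * log K) := by
    have h := sum_Ico_sub (fun k : ℕ => (k : ℝ) * log k) hK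
    simp only [Nat.cast_add, Nat.cast_one, log_one, mul_zero, sub_zero] at h
    rw [← h, ← sum_neg_distrib]
    exact sum_congr rfl fun k _ => by ring
  have hratio : ∀ k ∈ Ico 1 K, (k : ℝ) * log (g (k + 1) / g k) =
      k * (log (g (k + 1)) - log (g k)) := fun k hk => by
    have hk := mem_Ico.1 hk
    rw [log_div (hg (k + 1) (mem_Icc.2 ⟨by omega, hk.2⟩)).ne'
      (hg k (mem_Icc.2 ⟨hk.1, hk.2.le⟩)).ne']
  have hlog : ∀ k ∈ Icc 1 K, log (1 + g k) = log (g k) + log (1 + (g k)⁻¹) := fun k hk => by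
    have hgk := hg k hk
    rw [← log_mul hgk.ne' (by positivity), mul_add, mul_one, mul_inv_cancel₀ hgk.ne', add_comm]
  rw [cexpApprox, sum_add_distrib, sum_sub_distrib, htel, sum_congr rfl hratio,
    sum_Ico_mul_sub_eq (fun k => log (g k)) hK, ← mul_sum, sum_congr rfl hlog, sum_add_distrib,
    hlog K (by simp [hK])]
  field_simp
  ring

lemma tendsto_sum_log_one_add_sub_cexpApprox {ι : Type*} {l : Filter ι} {G e : ι → ℕ → ℝ}
    (hK : 1 ≤ K) (hG : ∀ k ∈ Icc 1 K, Tendsto (fun i => G i k) l atTop)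
    (he : ∀ k ∈ Ico 1 K, Tendsto (fun i => e i k) l (𝓝 0)) :
    Tendsto (fun i => ∑ k ∈ Icc 1 K, (1 / K : ℝ) * log (1 + G i k) - cexpApprox K (G i) (e i))
      l (𝓝 (log K)) := by
  have hsmall : ∀ k ∈ Icc 1 K, Tendsto (fun i => log (1 + (G i k)⁻¹)) l (𝓝 0) :=
    fun k hk => by simpa using ((hG k hk).inv_tendsto_atTop.const_add 1).log (by norm_num)
  have hlim := tendsto_const_nhds (x := log K) |>.add <|
    (((tendsto_finsetSum _ hsmall).sub ((hsmall K (by simp [hK])).const_mul (K : ℝ))).sub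
      (tendsto_finsetSum _ he)).const_mul (1 / K : ℝ)
  simp only [sum_const_zero, mul_zero, sub_zero, add_zero] at hlim
  refine hlim.congr' ?_
  filter_upwards [(eventually_all_finset _).2 fun k hk => (hG k hk).eventually_gt_atTop 0]
    with i hi
  rw [sum_log_one_add_sub_cexpApprox hK hi]

lemma cexpApprox_le_sSup_le (hK : 1 ≤ K) (hg : ∀ k ∈ Icc 1 K, 0 < g k)
    (hanti : ∀ k ∈ Ico 1 K, g (k + 1) < g k) (htop : (K : ℝ) - 1 ≤ g K) :
    cexpApprox K g (fun k => k * log (1 + g (k + 1) / g k / k)) ≤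
        sSup (CexpSet K g (fun k => k / K)) ∧
      sSup (CexpSet K g (fun k => k / K)) ≤
        cexpApprox K g (fun k => -log (1 - g (k + 1) / g k)) := by
  have hmem := cexpApprox_mem hK hg (fun k hk => (hanti k hk).le) htop
  have hle := fun r (hr : r ∈ CexpSet K g (fun k => k / K)) => le_cexpApprox hK hg hanti hr
  exact ⟨le_csSup ⟨_, hle⟩ hmem, csSup_le ⟨_, hmem⟩ hle⟩

end Gains

theorem tendsto_gap_of_tendsto_ratio_zero {ι : Type*} {l : Filter ι} {K : ℕ} {G : ι → ℕ → ℝ}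
    (hK : 1 ≤ K) (hG : ∀ k ∈ Icc 1 K, Tendsto (fun i => G i k) l atTop)
    (hratio : ∀ k ∈ Ico 1 K, Tendsto (fun i => G i (k + 1) / G i k) l (𝓝 0)) :
    Tendsto (fun i => ∑ k ∈ Icc 1 K, (1 / K : ℝ) * log (1 + G i k) -
      sSup (CexpSet K (G i) (fun k => k / K))) l (𝓝 (log K)) := by
  have hpos : ∀ᶠ i in l, ∀ k ∈ Icc 1 K, 0 < G i k :=
    (eventually_all_finset _).2 fun k hk => (hG k hk).eventually_gt_atTop 0
  have hlt : ∀ᶠ i in l, ∀ k ∈ Ico 1 K, G i (k + 1) / G i k < 1 :=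
    (eventually_all_finset _).2 fun k hk => (hratio k hk).eventually (gt_mem_nhds one_pos)
  have htop : ∀ᶠ i in l, (K : ℝ) - 1 ≤ G i K := (hG K (by simp [hK])).eventually_ge_atTop _
  have hsandwich := (hpos.and (hlt.and htop)).mono fun i ⟨hpos, hlt, htop⟩ =>
    cexpApprox_le_sSup_le hK hpos
      (fun k hk => (div_lt_one (hpos k (Ico_subset_Icc_self hk))).1 (hlt k hk)) htop
  have hup : ∀ k ∈ Ico 1 K, Tendsto (fun i => -log (1 - G i (k + 1) / G i k)) l (𝓝 0) :=
    fun k hk => by simpa using (((hratio k hk).const_sub 1).log (by norm_num)).neg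
  have hlow : ∀ k ∈ Ico 1 K,
      Tendsto (fun i => k * log (1 + G i (k + 1) / G i k / k)) l (𝓝 0) :=
    fun k hk => by
      simpa using ((((hratio k hk).div_const k).const_add 1).log (by norm_num)).const_mul (k : ℝ)
  refine tendsto_of_tendsto_of_tendsto_of_le_of_le'
    (tendsto_sum_log_one_add_sub_cexpApprox hK hG hup)
    (tendsto_sum_log_one_add_sub_cexpApprox hK hG hlow) ?_ ?_
  · filter_upwards [hsandwich] with i h
    linarith [h.2]
  · filter_upwards [hsandwich] with i h
    linarith [h.1]

lemma sum_Icc_one_pow_succ (d : ℝ) (n : ℕ) :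
    ∑ j ∈ Icc 1 (n + 1), d ^ j = d * (1 + ∑ j ∈ Icc 1 n, d ^ j) := by
  induction n with
  | zero => simp
  | succ n ih =>
    conv_rhs => rw [sum_Icc_succ_top (by omega)]
    rw [sum_Icc_succ_top (by omega), ih]
    ring

lemma tendsto_sum_Icc_one_pow_atTop (n : ℕ) :
    Tendsto (fun d : ℝ => ∑ j ∈ Icc 1 (n + 1), d ^ j) atTop atTop := by
  refine tendsto_atTop_mono' _ ?_ tendsto_id
  filter_upwards [eventually_ge_atTop 0] with d hd
  rw [sum_Icc_one_pow_succ]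
  exact le_mul_of_one_le_right hd (le_add_of_nonneg_right (by positivity))

lemma tendsto_sum_Icc_one_pow_div_succ (n : ℕ) :
    Tendsto (fun d : ℝ => (∑ j ∈ Icc 1 n, d ^ j) / ∑ j ∈ Icc 1 (n + 1), d ^ j) atTop (𝓝 0) := by
  refine tendsto_of_tendsto_of_tendsto_of_le_of_le' tendsto_const_nhds tendsto_inv_atTop_zero
    ?_ ?_ <;> filter_upwards [eventually_gt_atTop 0] with d hd <;> rw [sum_Icc_one_pow_succ]
  · positivity
  · have hS : 0 ≤ ∑ j ∈ Icc 1 n, d ^ j := by positivity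
    rw [div_le_iff₀ (by positivity), inv_mul_cancel_left₀ hd.ne']
    linarith

/-- Forward part of the worst-case additive gap: for the power-gain family
`g_k = ∑_{j=1}^{K-k+1} d^j` with uniform probabilities `p_k = 1/K`, the
additive gap between the ergodic capacity and the one-block expected capacity
converges to `log K` as `d → ∞`. -/
theorem additive_gap_forward
    (K : ℕ) (hK : 2 ≤ K) :
    Tendsto
      (fun d : ℝ =>
        (∑ k ∈ Finset.Icc 1 K,
          (1 / (K : ℝ)) *
            Real.log (1 + ∑ j ∈ Finset.Icc 1 (K - k + 1), d ^ j)) -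
        sSup (CexpSet K
          (fun k => ∑ j ∈ Finset.Icc 1 (K - k + 1), d ^ j)
          (fun k => (k : ℝ) / K)))
      atTop (nhds (Real.log K)) := by
  refine tendsto_gap_of_tendsto_ratio_zero (G := fun d k => ∑ j ∈ Icc 1 (K - k + 1), d ^ j)
    (by omega) (fun k _ => tendsto_sum_Icc_one_pow_atTop (K - k)) fun k hk => ?_
  have hk : K - (k + 1) + 1 = K - k := by have := (mem_Ico.1 hk).2; omega
  simp only [hk]
  exact tendsto_sum_Icc_one_pow_div_succ (K - k)
end

section
/- Fix K ≥ 2 and for d > 0 define n_k = ∑_{j=1}^k d^j and p_k = d^k / ∑_{j=1}^K d^j for k = 1,...,K, so that F_k = n_k/n_K. Then all crossing points z_{k,l} = (F_k n_l - F_l n_k)/(F_l - F_k) equal 0, the one-block expected capacity equals C_exp(F_G^{(d)},1) = log((n_K+1)/n_K), and the multiplicative gap M(F_G^{(d)},1) = C_erg(F_G^{(d)})/C_exp(F_G^{(d)},1) converges to K as d → ∞. -/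
/-!
Since `F_k = n_k / n_K`, every numerator `F_k n_l - F_l n_k` vanishes.

For the capacity, Bernoulli's inequality shows that `x ↦ x log ((x + b) / (x + a))` is increasing
on `(0, ∞)` when `0 ≤ a ≤ b`. Hence the `k`-th term `F_k log ((n_k + β_k) / (n_k + β_{k-1}))` is at
most `log ((n_K + β_k) / (n_K + β_{k-1}))`; these telescope to `log ((n_K + β_K) / n_K)`, which is at
most `log ((n_K + 1) / n_K)`, and this value is attained by putting all the power on the last state.

Finally `p_k log (1 + 1/n_k) ~ d^k / (n_k n_K) ~ 1 / n_K ~ log (1 + 1/n_K)` as `d → ∞`, so the gap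
is a sum of `K` ratios, each tending to `1`.
-/

open Real Filter

/-- Achievable expected-rate values of the one-block power allocation program
in terms of the inverse power gains `n_k = 1/g_k`. -/
def CexpSetN (K : ℕ) (n F : ℕ → ℝ) : Set ℝ :=
  {r | ∃ β : ℕ → ℝ, β 0 = 0 ∧ (∀ k, 1 ≤ k → k ≤ K → β (k - 1) ≤ β k) ∧ β K ≤ 1 ∧
    r = ∑ k ∈ Finset.Icc 1 K,
      F k * Real.log ((n k + β k) / (n k + β (k - 1)))}

open Finset Topology

theorem zc_eq_zero_of_forall_eq_div {n F : ℕ → ℝ} {c : ℝ} (hF : ∀ k, F k = n k / c) (k l : ℕ) :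
    zc n F k l = 0 := by
  rw [zc, hF, hF]
  ring

theorem Finset.sum_Icc_one_sub_pred {M : Type*} [AddCommGroup M] (g : ℕ → M) (K : ℕ) :
    ∑ k ∈ Icc 1 K, (g k - g (k - 1)) = g K - g 0 := by
  rw [← sum_range_sub, range_eq_Ico, ← Ico_add_one_right_eq_Icc,
    show Ico 1 (K + 1) = Ico (0 + 1) (K + 1) from rfl, ← sum_Ico_add' (fun k => g k - g (k - 1))]
  simp

theorem monotoneOn_mul_log_add_div_add {a b : ℝ} (ha : 0 ≤ a) (hab : a ≤ b) :
    MonotoneOn (fun x => x * log ((x + b) / (x + a))) (Set.Ioi 0) := by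
  intro m (hm : 0 < m) M (hM : 0 < M) hmM
  have hma : 0 < m + a := by linarith
  have hMa : 0 < M + a := by linarith
  have hMb : 0 < M + b := by linarith
  have hbern : (m + b) / (m + a) ≤ ((M + b) / (M + a)) ^ (M / m) :=
    calc (m + b) / (m + a) ≤ 1 + M / m * ((b - a) / (M + a)) := by
          rw [div_le_iff₀ hma]
          field_simp
          nlinarith [mul_nonneg (sub_nonneg.2 hab) (mul_nonneg ha (sub_nonneg.2 hmM))]
      _ ≤ (1 + (b - a) / (M + a)) ^ (M / m) :=
          one_add_mul_self_le_rpow_one_add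
            (by linarith [div_nonneg (sub_nonneg.2 hab) hMa.le]) ((one_le_div hm).2 hmM)
      _ = ((M + b) / (M + a)) ^ (M / m) := by
          congr 1
          field_simp
          ring
  have hlog := log_le_log (div_pos (by linarith) hma) hbern
  rw [log_rpow (div_pos hMb hMa)] at hlog
  calc m * log ((m + b) / (m + a)) ≤ m * (M / m * log ((M + b) / (M + a))) :=
        mul_le_mul_of_nonneg_left hlog hm.le
    _ = M * log ((M + b) / (M + a)) := by field_simp

section CexpSetN

variable {K : ℕ} {n F : ℕ → ℝ}

theorem log_mem_upperBounds_CexpSetN (hK : 1 ≤ K) (hpos : ∀ k ∈ Icc 1 K, 0 < n k)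
    (hle : ∀ k ∈ Icc 1 K, n k ≤ n K) (hF : ∀ k ∈ Icc 1 K, F k = n k / n K) :
    log ((n K + 1) / n K) ∈ upperBounds (CexpSetN K n F) := by
  rintro r ⟨β, hβ0, hβmono, hβK, rfl⟩
  have hnK : 0 < n K := hpos K (right_mem_Icc.2 hK)
  have hβnonneg : ∀ k ≤ K, 0 ≤ β k := by
    intro k
    induction k with
    | zero => simp [hβ0]
    | succ k ih =>
      intro hk
      exact (ih (by omega)).trans (by simpa using hβmono (k + 1) (by omega) hk)
  have hβK_nonneg := hβnonneg K le_rfl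
  have hterm : ∀ k ∈ Icc 1 K, F k * log ((n k + β k) / (n k + β (k - 1))) ≤
      log (n K + β k) - log (n K + β (k - 1)) := by
    intro k hk
    obtain ⟨hk1, hkK⟩ := mem_Icc.1 hk
    have hβ : 0 ≤ β (k - 1) := hβnonneg _ (by omega)
    have hβk : β (k - 1) ≤ β k := hβmono k hk1 hkK
    have hmono := monotoneOn_mul_log_add_div_add hβ hβk (hpos k hk) hnK (hle k hk)
    rw [hF k hk, div_mul_eq_mul_div, div_le_iff₀ hnK, ← log_div (by linarith) (by linarith)]
    linarith
  calc ∑ k ∈ Icc 1 K, F k * log ((n k + β k) / (n k + β (k - 1)))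
      ≤ ∑ k ∈ Icc 1 K, (log (n K + β k) - log (n K + β (k - 1))) := sum_le_sum hterm
    _ = log ((n K + β K) / n K) := by
        rw [sum_Icc_one_sub_pred (fun k => log (n K + β k)), hβ0, add_zero,
          log_div (by linarith) hnK.ne']
    _ ≤ log ((n K + 1) / n K) := by
        apply log_le_log (div_pos (by linarith) hnK)
        gcongr

theorem log_mem_CexpSetN (hK : 1 ≤ K) (hpos : ∀ k ∈ Icc 1 K, 0 < n k)
    (hF : ∀ k ∈ Icc 1 K, F k = n k / n K) :
    log ((n K + 1) / n K) ∈ CexpSetN K n F := by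
  have hKmem : K ∈ Icc 1 K := right_mem_Icc.2 hK
  refine ⟨fun j => if K ≤ j then 1 else 0, by simp; omega, fun k _ _ => ?_, by simp, ?_⟩
  · dsimp only
    split_ifs <;> first | omega | norm_num
  · rw [sum_eq_single_of_mem K hKmem]
    · simp [hF K hKmem, div_self (hpos K hKmem).ne', show ¬K ≤ K - 1 by omega]
    · intro k hk hk_ne
      have hk_lt : ¬K ≤ k := by have := (mem_Icc.1 hk).2; omega
      simp [hk_lt, show ¬K ≤ k - 1 by omega, div_self (hpos k hk).ne']

theorem sSup_CexpSetN_eq (hK : 1 ≤ K) (hpos : ∀ k ∈ Icc 1 K, 0 < n k)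
    (hle : ∀ k ∈ Icc 1 K, n k ≤ n K) (hF : ∀ k ∈ Icc 1 K, F k = n k / n K) :
    sSup (CexpSetN K n F) = log ((n K + 1) / n K) :=
  IsGreatest.csSup_eq ⟨log_mem_CexpSetN hK hpos hF, log_mem_upperBounds_CexpSetN hK hpos hle hF⟩

end CexpSetN

theorem tendsto_sum_Icc_pow_atTop {k : ℕ} (hk : 1 ≤ k) :
    Tendsto (fun d : ℝ => ∑ j ∈ Icc 1 k, d ^ j) atTop atTop := by
  refine tendsto_atTop_mono' atTop ?_ tendsto_id
  filter_upwards [eventually_ge_atTop 0] with d hd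
  simpa using single_le_sum (fun j _ => pow_nonneg hd j) (mem_Icc.2 ⟨le_rfl, hk⟩)

theorem tendsto_pow_div_sum_Icc_pow {k : ℕ} (hk : 1 ≤ k) :
    Tendsto (fun d : ℝ => d ^ k / ∑ j ∈ Icc 1 k, d ^ j) atTop (𝓝 1) := by
  have hinv : Tendsto (fun d : ℝ => ∑ j ∈ Icc 1 k, d⁻¹ ^ (k - j)) atTop (𝓝 1) := by
    have := tendsto_finsetSum (Icc 1 k) fun j _ => (tendsto_inv_atTop_zero (𝕜 := ℝ)).pow (k - j)
    rwa [sum_eq_single_of_mem k (right_mem_Icc.2 hk) fun j hj hjk =>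
      zero_pow (by have := (mem_Icc.1 hj).2; omega), Nat.sub_self, pow_zero] at this
  have hinv' := hinv.inv₀ one_ne_zero
  rw [inv_one] at hinv'
  refine hinv'.congr' ?_
  filter_upwards [eventually_gt_atTop 0] with d hd
  rw [← inv_div, sum_div]
  congr 1
  refine sum_congr rfl fun j hj => ?_
  rw [inv_pow, pow_sub₀ d hd.ne' (mem_Icc.1 hj).2]
  field_simp

theorem Filter.Tendsto.mul_log_one_add_inv {α : Type*} {l : Filter α} {f : α → ℝ}
    (hf : Tendsto f l atTop) : Tendsto (fun x => f x * Real.log (1 + 1 / f x)) l (𝓝 1) :=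
  (tendsto_mul_log_one_add_div_atTop 1).comp hf

theorem tendsto_sum_pow_div_mul_log_div_log {K : ℕ} (hK : 1 ≤ K) {n : ℝ → ℕ → ℝ}
    (hn_top : ∀ k ∈ Icc 1 K, Tendsto (n · k) atTop atTop)
    (hn_pow : ∀ k ∈ Icc 1 K, Tendsto (fun d => d ^ k / n d k) atTop (𝓝 1)) :
    Tendsto (fun d => (∑ k ∈ Icc 1 K, d ^ k / n d K * log (1 + 1 / n d k)) /
      log ((n d K + 1) / n d K)) atTop (𝓝 K) := by
  have hKmem : K ∈ Icc 1 K := right_mem_Icc.2 hK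
  have hterm : ∀ k ∈ Icc 1 K, Tendsto (fun d => d ^ k / n d k * (n d k * log (1 + 1 / n d k)) /
      (n d K * log (1 + 1 / n d K))) atTop (𝓝 1) := fun k hk => by
    simpa [Pi.div_def] using ((hn_pow k hk).mul (hn_top k hk).mul_log_one_add_inv).div
      (hn_top K hKmem).mul_log_one_add_inv one_ne_zero
  have hsum := tendsto_finsetSum (Icc 1 K) hterm
  rw [sum_const, Nat.card_Icc, Nat.add_sub_cancel, nsmul_one] at hsum
  refine hsum.congr' ?_
  filter_upwards [(eventually_all_finset (Icc 1 K)).2 fun k hk => (hn_top k hk).eventually_ne_atTop 0]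
    with d hd
  rw [sum_div, add_div, div_self (hd K hKmem), add_comm]
  refine sum_congr rfl fun k hk => ?_
  field_simp [hd k hk, hd K hKmem]

/-- Forward part of the worst-case multiplicative gap: for the family
`n_k = ∑_{j=1}^k d^j`, `p_k = d^k/∑_{j=1}^K d^j` (so `F_k = n_k/n_K`), all
crossing points are `0`, the one-block expected capacity equals
`log((n_K+1)/n_K)`, and the multiplicative gap converges to `K` as `d → ∞`. -/
theorem multiplicative_gap_forward
    (K : ℕ) (hK : 2 ≤ K)
    (n : ℝ → ℕ → ℝ) (hn : ∀ d k, n d k = ∑ j ∈ Finset.Icc 1 k, d ^ j)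
    (p : ℝ → ℕ → ℝ)
    (hp : ∀ d k, p d k = d ^ k / ∑ j ∈ Finset.Icc 1 K, d ^ j)
    (F : ℝ → ℕ → ℝ) (hF : ∀ d k, F d k = n d k / n d K) :
    (∀ d : ℝ, 0 < d → ∀ k l, 1 ≤ k → k < l → l ≤ K →
      zc (n d) (F d) k l = 0) ∧
    (∀ d : ℝ, 0 < d →
      sSup (CexpSetN K (n d) (F d)) = Real.log ((n d K + 1) / n d K)) ∧
    Tendsto
      (fun d : ℝ =>
        (∑ k ∈ Finset.Icc 1 K, p d k * Real.log (1 + 1 / n d k)) /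
          sSup (CexpSetN K (n d) (F d)))
      atTop (nhds (K : ℝ)) := by
  have hK1 : 1 ≤ K := by omega
  have hCexp : ∀ d : ℝ, 0 < d →
      sSup (CexpSetN K (n d) (F d)) = log ((n d K + 1) / n d K) := by
    intro d hd
    refine sSup_CexpSetN_eq hK1 (fun k hk => ?_) (fun k hk => ?_) (fun k _ => hF d k)
    · rw [hn]
      exact sum_pos (fun j _ => pow_pos hd j) (nonempty_Icc.2 (mem_Icc.1 hk).1)
    · rw [hn, hn]
      exact sum_le_sum_of_subset_of_nonneg (Icc_subset_Icc_right (mem_Icc.1 hk).2)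
        fun j _ _ => (pow_pos hd j).le
  refine ⟨fun d _ k l _ _ _ => zc_eq_zero_of_forall_eq_div (hF d) k l, hCexp, ?_⟩
  refine (tendsto_sum_pow_div_mul_log_div_log hK1 (n := n)
    (fun k hk => by simp only [hn]; exact tendsto_sum_Icc_pow_atTop (mem_Icc.1 hk).1)
    (fun k hk => by simp only [hn]; exact tendsto_pow_div_sum_Icc_pow (mem_Icc.1 hk).1)).congr' ?_
  filter_upwards [eventually_gt_atTop 0] with d hd
  simp only [hCexp d hd, hp, ← hn d K]
end

section
/- Let 0 < n_k < n_m, 0 < F_k < F_m ≤ 1, and suppose z_{k,m} := (F_k n_m - F_m n_k)/(F_m - F_k) ≤ 0 (equivalently F_k n_m ≤ F_m n_k). Define f(z) = log((n_k+z)/n_k) / log((n_m+z)/n_m) for z > 0. Then f is monotone decreasing on (0,∞) and f(1) ≤ n_m/n_k ≤ F_m/F_k. -/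
open Real Set

/-!
Write `L_c(z) = log((c+z)/c)`. The derivative of `L_{n_k} / L_{n_m}` has the sign of
`(n_m+z) L_{n_m}(z) - (n_k+z) L_{n_k}(z)`, and `f(1) ≤ n_m/n_k` says
`n_k L_{n_k}(1) ≤ n_m L_{n_m}(1)`. Both `c L_c(z)` and `(c+z) L_c(z)` are `z` times the secant
slope `log w / (w - 1)` of the concave function `log` through `1`, at `w = (c+z)/c` and at
`w = c/(c+z)` respectively, hence monotone in `c`.
-/

namespace Real

theorem log_div_sub_one_lt_log_div_sub_one {x y : ℝ} (hx : 0 < x) (hx1 : x ≠ 1) (hy1 : y ≠ 1)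
    (hxy : x < y) : log y / (y - 1) < log x / (x - 1) := by
  simpa using
    strictConcaveOn_log_Ioi.secant_strict_mono (mem_Ioi.2 one_pos) hx (hx.trans hxy) hx1 hy1 hxy

variable {a b z : ℝ}

theorem log_add_div_pos (ha : 0 < a) (hz : 0 < z) : 0 < log ((a + z) / a) :=
  log_pos ((one_lt_div ha).2 (by linarith))

theorem mul_log_add_div_lt_mul_log_add_div (ha : 0 < a) (hab : a < b) (hz : 0 < z) :
    a * log ((a + z) / a) < b * log ((b + z) / b) := by
  have hb : 0 < b := ha.trans hab
  have secant (c : ℝ) (hc : 0 < c) :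
      c * log ((c + z) / c) = z * (log ((c + z) / c) / ((c + z) / c - 1)) := by
    rw [add_div, div_self hc.ne', add_sub_cancel_left]
    field_simp
  have hw (c : ℝ) (hc : 0 < c) : (c + z) / c ≠ 1 := ((one_lt_div hc).2 (by linarith)).ne'
  have hlt : (b + z) / b < (a + z) / a := by
    rw [div_lt_div_iff₀ hb ha]
    nlinarith
  rw [secant a ha, secant b hb]
  exact mul_lt_mul_of_pos_left
    (log_div_sub_one_lt_log_div_sub_one (by positivity) (hw b hb) (hw a ha) hlt) hz

theorem add_mul_log_add_div_lt_add_mul_log_add_div (ha : 0 < a) (hab : a < b) (hz : 0 < z) :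
    (b + z) * log ((b + z) / b) < (a + z) * log ((a + z) / a) := by
  have hb : 0 < b := ha.trans hab
  have secant (c : ℝ) (hc : 0 < c) :
      (c + z) * log ((c + z) / c) = z * (log (c / (c + z)) / (c / (c + z) - 1)) := by
    rw [← inv_div, log_inv, div_sub_one (by positivity), sub_add_cancel_left]
    field_simp
  have hy (c : ℝ) (hc : 0 < c) : c / (c + z) ≠ 1 :=
    ((div_lt_one (by positivity)).2 (by linarith)).ne
  have hlt : a / (a + z) < b / (b + z) := by
    rw [div_lt_div_iff₀ (by positivity) (by positivity)]
    nlinarith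
  rw [secant a ha, secant b hb]
  exact mul_lt_mul_of_pos_left
    (log_div_sub_one_lt_log_div_sub_one (by positivity) (hy a ha) (hy b hb) hlt) hz

theorem log_add_div_div_log_add_div_lt (ha : 0 < a) (hab : a < b) (hz : 0 < z) :
    log ((a + z) / a) / log ((b + z) / b) < b / a := by
  rw [div_lt_div_iff₀ (log_add_div_pos (ha.trans hab) hz) ha]
  linarith [mul_log_add_div_lt_mul_log_add_div ha hab hz]

theorem hasDerivAt_log_add_div (ha : a ≠ 0) (hz : a + z ≠ 0) :
    HasDerivAt (fun z => log ((a + z) / a)) (a + z)⁻¹ z := by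
  have h := (((hasDerivAt_id' z).const_add a).div_const a).log (div_ne_zero hz ha)
  convert h using 1
  field_simp

theorem strictAntiOn_log_add_div_div_log_add_div (ha : 0 < a) (hab : a < b) :
    StrictAntiOn (fun z => log ((a + z) / a) / log ((b + z) / b)) (Ioi 0) := by
  have hb : 0 < b := ha.trans hab
  have hderiv : ∀ z ∈ Ioi (0 : ℝ), HasDerivAt (fun z => log ((a + z) / a) / log ((b + z) / b))
      (((a + z)⁻¹ * log ((b + z) / b) - log ((a + z) / a) * (b + z)⁻¹) /
        log ((b + z) / b) ^ 2) z := fun z (hz : 0 < z) =>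
    (hasDerivAt_log_add_div ha.ne' (by positivity)).div
      (hasDerivAt_log_add_div hb.ne' (by positivity)) (log_add_div_pos hb hz).ne'
  refine strictAntiOn_of_deriv_neg (convex_Ioi 0)
    (fun z hz => (hderiv z hz).continuousAt.continuousWithinAt) ?_
  rw [interior_Ioi]
  intro z (hz : 0 < z)
  rw [(hderiv z hz).deriv]
  refine div_neg_of_neg_of_pos ?_ (pow_pos (log_add_div_pos hb hz) 2)
  have key := add_mul_log_add_div_lt_add_mul_log_add_div ha hab hz
  rw [sub_neg, inv_mul_eq_div, ← div_eq_mul_inv,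
    div_lt_div_iff₀ (by positivity) (by positivity)]
  linarith

end Real

theorem log_ratio_decreasing_and_bound_general
    (nk nm Fk Fm : ℝ) (hnk : 0 < nk) (hn : nk < nm)
    (hFk : 0 < Fk) (hF : Fk < Fm)
    (hz : (Fk * nm - Fm * nk) / (Fm - Fk) ≤ 0) :
    AntitoneOn (fun z => Real.log ((nk + z) / nk) / Real.log ((nm + z) / nm))
        (Set.Ioi (0 : ℝ)) ∧
    Real.log ((nk + 1) / nk) / Real.log ((nm + 1) / nm) ≤ nm / nk ∧
    nm / nk ≤ Fm / Fk := by
  have hcross : Fk * nm - Fm * nk ≤ 0 * (Fm - Fk) := (div_le_iff₀ (sub_pos.2 hF)).1 hz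
  refine ⟨(strictAntiOn_log_add_div_div_log_add_div hnk hn).antitoneOn,
    (log_add_div_div_log_add_div_lt hnk hn one_pos).le, ?_⟩
  rw [div_le_div_iff₀ hnk hFk]
  linarith

/-- Monotonicity and bound on the ratio of logarithmic rate functions:
if `0 < n_k < n_m`, `0 < F_k < F_m ≤ 1` and
`z_{k,m} = (F_k n_m - F_m n_k)/(F_m - F_k) ≤ 0`, then
`f(z) = log((n_k+z)/n_k)/log((n_m+z)/n_m)` is monotone decreasing on `(0,∞)`
and `f(1) ≤ n_m/n_k ≤ F_m/F_k`. -/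
theorem log_ratio_decreasing_and_bound
    (nk nm Fk Fm : ℝ) (hnk : 0 < nk) (hn : nk < nm)
    (hFk : 0 < Fk) (hF : Fk < Fm) (hFm : Fm ≤ 1)
    (hz : (Fk * nm - Fm * nk) / (Fm - Fk) ≤ 0) :
    AntitoneOn (fun z => Real.log ((nk + z) / nk) / Real.log ((nm + z) / nm))
        (Set.Ioi (0 : ℝ)) ∧
    Real.log ((nk + 1) / nk) / Real.log ((nm + 1) / nm) ≤ nm / nk ∧
    nm / nk ≤ Fm / Fk :=
  log_ratio_decreasing_and_bound_general nk nm Fk Fm hnk hn hFk hF hz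
end
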